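/- arXiv:2003.04434 — 2 statements merged into one kernel-verified Lean document; each statement's English description precedes it below -/
import Mathlib

section
/- Let R = K[x_1][x_2;θ_2,δ_2]···[x_N;θ_N,δ_N] be a CGL extension whose presentation has a D-form R_D = D⟨x_1,…,x_N⟩, for a unital subring D ⊆ K, containing the homogeneous prime elements y_1,…,y_N. If Y is the multiplicative set generated by D^× ∪ {y_1,…,y_N}, then R_D[Y^{-1}] ∩ R = R_D, where the intersection is taken inside the localization R[Y^{-1}]. -/
open scoped Classical

namespace GYint

/-! ## Subalgebras generated by subsets of the generators -/

variable (K : Type) [Field K] {R : Type} [Ring R] [Algebra K R]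

/-- The `K`-subalgebra of `R` generated by the generators `x i` with `P i`. -/
def xAdj {N : ℕ} (x : Fin N → R) (P : Fin N → Prop) : Subalgebra K R :=
  Algebra.adjoin K {r : R | ∃ i : Fin N, P i ∧ r = x i}

/-- `R_k` : the subalgebra generated by the first `k` generators (0-indexed: indices `< k`). -/
def Rk {N : ℕ} (x : Fin N → R) (k : ℕ) : Subalgebra K R :=
  xAdj K x (fun i => (i : ℕ) < k)

/-- The interval subalgebra `R_{[a,b]}` generated by `x_a, …, x_b` (0-indexed, inclusive). -/
def Rint {N : ℕ} (x : Fin N → R) (a b : ℕ) : Subalgebra K R :=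
  xAdj K x (fun i => a ≤ (i : ℕ) ∧ (i : ℕ) ≤ b)

variable {K}

/-- The ordered monomial `x^f = x_1^{f 1} ⋯ x_N^{f N}`. -/
def oMono {N : ℕ} (x : Fin N → R) (f : Fin N → ℕ) : R :=
  ((List.finRange N).map (fun i => x i ^ f i)).prod

/-- Evaluation at `h ∈ (Kˣ)^r` of the character with exponent vector `m`. -/
def charEval {r : ℕ} (h : Fin r → Kˣ) (m : Fin r → ℤ) : Kˣ :=
  ∏ i, h i ^ m i

/-- The multiplicative bicharacter `Ω_t` on `ℤ^N` associated to a multiplicatively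
skew-symmetric matrix `t`, with `Ω_t(e_j, e_k) = t j k`. -/
def omegaU {N : ℕ} (t : Fin N → Fin N → Kˣ) (f g : Fin N → ℤ) : Kˣ :=
  ∏ p : Fin N × Fin N, t p.1 p.2 ^ (f p.1 * g p.2)

/-! ## CGL extensions (quantum nilpotent algebras) -/

/-- An iterated skew polynomial (Ore) presentation
`R = K[x_1][x_2; θ_2, δ_2] ⋯ [x_N; θ_N, δ_N]` of a `K`-algebra `R`, together with the
rational torus action data making it a CGL extension (quantum nilpotent algebra).
Here `θ k` and `δ k` are recorded as maps `R → R` whose restrictions to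
`R_{k-1} = K⟨x_1,…,x_{k-1}⟩` are, respectively, a `K`-algebra automorphism (with
inverse the restriction of `θinv k`) and a `K`-linear locally nilpotent
`θ_k`-derivation; `x k * a = θ k a * x k + δ k a` for `a ∈ R_{k-1}`; the ordered
monomials in the generators form a `K`-basis of `R` (so each `R_k` is a free left
`R_{k-1}`-module with basis the powers of `x_k`); each `x k` is an eigenvector of the
torus `H = (Kˣ)^rk` with character `chi k`; `θ k` is implemented by the torus element
`hElt k`, whose eigenvalue `lam k` on `x k` is not a root of unity, and whose
eigenvalue on `x j` (`j < k`) is `lamM k j`, the multiplicatively skew-symmetric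
`λ`-matrix of the presentation. -/
structure CGLExt (K : Type) [Field K] (R : Type) [Ring R] [Algebra K R] (N : ℕ) where
  x : Fin N → R
  pbw : Module.Basis (Fin N → ℕ) K R
  pbw_eq : ∀ f, pbw f = oMono x f
  rk : ℕ
  act : (Fin rk → Kˣ) →* (R ≃ₐ[K] R)
  chi : Fin N → Fin rk → ℤ
  eigen : ∀ (h : Fin rk → Kˣ) (k : Fin N), act h (x k) = (charEval h (chi k) : K) • x k
  θ : Fin N → R → R
  θinv : Fin N → R → R
  δ : Fin N → R → R
  θ_mem : ∀ k : Fin N, ∀ a ∈ Rk K x (k : ℕ), θ k a ∈ Rk K x (k : ℕ)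
  θinv_mem : ∀ k : Fin N, ∀ a ∈ Rk K x (k : ℕ), θinv k a ∈ Rk K x (k : ℕ)
  δ_mem : ∀ k : Fin N, ∀ a ∈ Rk K x (k : ℕ), δ k a ∈ Rk K x (k : ℕ)
  θ_linear : ∀ (k : Fin N) (s : K), ∀ a ∈ Rk K x (k : ℕ), ∀ b ∈ Rk K x (k : ℕ),
    θ k (s • a + b) = s • θ k a + θ k b
  θ_mul : ∀ k : Fin N, ∀ a ∈ Rk K x (k : ℕ), ∀ b ∈ Rk K x (k : ℕ), θ k (a * b) = θ k a * θ k b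
  θ_one : ∀ k : Fin N, θ k 1 = 1
  θ_left_inv : ∀ k : Fin N, ∀ a ∈ Rk K x (k : ℕ), θinv k (θ k a) = a
  θ_right_inv : ∀ k : Fin N, ∀ a ∈ Rk K x (k : ℕ), θ k (θinv k a) = a
  δ_linear : ∀ (k : Fin N) (s : K), ∀ a ∈ Rk K x (k : ℕ), ∀ b ∈ Rk K x (k : ℕ),
    δ k (s • a + b) = s • δ k a + δ k b
  δ_tw : ∀ k : Fin N, ∀ a ∈ Rk K x (k : ℕ), ∀ b ∈ Rk K x (k : ℕ),
    δ k (a * b) = δ k a * b + θ k a * δ k b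
  ore : ∀ k : Fin N, ∀ a ∈ Rk K x (k : ℕ), x k * a = θ k a * x k + δ k a
  δ_nil : ∀ k : Fin N, ∀ a ∈ Rk K x (k : ℕ), ∃ n : ℕ, (δ k)^[n] a = 0
  hElt : Fin N → Fin rk → Kˣ
  lam : Fin N → Kˣ
  hElt_theta : ∀ k : Fin N, ∀ a ∈ Rk K x (k : ℕ), act (hElt k) a = θ k a
  hElt_lam : ∀ k : Fin N, act (hElt k) (x k) = (lam k : K) • x k
  lam_nru : ∀ (k : Fin N) (n : ℕ), 0 < n → lam k ^ n ≠ 1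
  lamM : Fin N → Fin N → Kˣ
  lamM_spec : ∀ k j : Fin N, (j : ℕ) < (k : ℕ) → act (hElt k) (x j) = (lamM k j : K) • x j
  lamM_diag : ∀ k, lamM k k = 1
  lamM_skew : ∀ k j, lamM j k = (lamM k j)⁻¹

/-- A symmetric CGL extension: additionally `δ_k (x_j) ∈ K⟨x_{j+1},…,x_{k-1}⟩` for all
`j < k` (via the Ore relation, `δ_k(x_j) = x_k x_j - λ_{kj} x_j x_k`), and for each `j`
there is an element `h_j^*` of the torus acting on `x_k` by `λ_{kj}⁻¹` for `k > j` and
on `x_j` by an eigenvalue `λ_j^*` which is not a root of unity. -/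
structure SymCGLExt (K : Type) [Field K] (R : Type) [Ring R] [Algebra K R] (N : ℕ)
    extends CGLExt K R N where
  sym_delta : ∀ j k : Fin N, (j : ℕ) < (k : ℕ) →
    x k * x j - (lamM k j : K) • (x j * x k) ∈ Rint K x ((j : ℕ) + 1) ((k : ℕ) - 1)
  hStar : Fin N → Fin rk → Kˣ
  lamStar : Fin N → Kˣ
  hStar_spec : ∀ j k : Fin N, (j : ℕ) < (k : ℕ) →
    act (hStar j) (x k) = (((lamM k j)⁻¹ : Kˣ) : K) • x k
  hStar_lam : ∀ j : Fin N, act (hStar j) (x j) = (lamStar j : K) • x j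
  lamStar_nru : ∀ (j : Fin N) (n : ℕ), 0 < n → lamStar j ^ n ≠ 1

/-- A homogeneous element (`H`-eigenvector with an integral character; `0` is allowed). -/
def IsHomog {N : ℕ} (E : CGLExt K R N) (u : R) : Prop :=
  ∃ m : Fin E.rk → ℤ, ∀ h : Fin E.rk → Kˣ, E.act h u = (charEval h m : K) • u

/-- `p` is a normal element of the subalgebra `S` : `p S = S p`. -/
def IsNormalIn (S : Subalgebra K R) (p : R) : Prop :=
  (∀ a ∈ S, ∃ b ∈ S, p * a = b * p) ∧ (∀ a ∈ S, ∃ b ∈ S, a * p = p * b)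

/-- `p` is a prime element of the subalgebra `S`: a nonzero normal element of `S`
such that `S/(p)` is a domain. -/
def IsPrimeElemIn (S : Subalgebra K R) (p : R) : Prop :=
  p ≠ 0 ∧ p ∈ S ∧ IsNormalIn S p ∧
  ∀ a b : R, a ∈ S → b ∈ S → (∃ c ∈ S, a * b = p * c) →
    (∃ c ∈ S, a = p * c) ∨ (∃ c ∈ S, b = p * c)

/-! ## Predecessor and successor functions -/

/-- The predecessor function `p(k)` of the level sets of `η` (`⊥` playing the role of `-∞`). -/
noncomputable def predIdx {N : ℕ} {α : Type} (η : Fin N → α) (k : Fin N) : WithBot (Fin N) :=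
  (Finset.univ.filter (fun j : Fin N => (j : ℕ) < (k : ℕ) ∧ η j = η k)).max

/-- The successor function `s(k)` of the level sets of `η` (`⊤` playing the role of `+∞`). -/
noncomputable def succIdx {N : ℕ} {α : Type} (η : Fin N → α) (k : Fin N) : WithTop (Fin N) :=
  (Finset.univ.filter (fun j : Fin N => (k : ℕ) < (j : ℕ) ∧ η j = η k)).min

/-- Iterated successor `s^m(k)`. -/
noncomputable def succIter {N : ℕ} {α : Type} (η : Fin N → α) : ℕ → Fin N → WithTop (Fin N)
  | 0, k => (k : WithTop (Fin N))
  | n + 1, k => WithTop.recTopCoe ⊤ (fun j => succIdx η j) (succIter η n k)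

/-- Iterated predecessor `p^m(k)`. -/
noncomputable def predIter {N : ℕ} {α : Type} (η : Fin N → α) : ℕ → Fin N → WithBot (Fin N)
  | 0, k => (k : WithBot (Fin N))
  | n + 1, k => WithBot.recBotCoe ⊥ (fun j => predIdx η j) (predIter η n k)

/-! ## The sequence of homogeneous prime elements, [GY1, Theorem 4.3] -/

/-- The data of [GY1, Theorem 4.3] for a CGL extension `E`: a function `η : [1,N] → ℤ`,
elements `c_k ∈ R_{k-1}`, and the sequence `y_1, …, y_N` of homogeneous elements defined
by the recursion `y_k = y_{p(k)} x_k - c_k` (resp. `y_k = x_k` when `p(k) = -∞`) such that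
for every `k`, `{y_j : j ≤ k, s(j) > k}` is a list of the homogeneous prime elements of
`R_k` up to scalar multiples. -/
structure YSystem {N : ℕ} (E : CGLExt K R N) where
  η : Fin N → ℤ
  y : Fin N → R
  c : Fin N → R
  c_mem : ∀ k : Fin N, c k ∈ Rk K E.x (k : ℕ)
  y_rec : ∀ k j : Fin N, predIdx η k = (j : WithBot (Fin N)) → y k = y j * E.x k - c k
  y_base : ∀ k : Fin N, predIdx η k = ⊥ → y k = E.x k
  y_homog : ∀ k : Fin N, IsHomog E (y k)
  y_prime : ∀ k j : Fin N, (j : ℕ) ≤ (k : ℕ) →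
    (∀ l : Fin N, succIdx η j = (l : WithTop (Fin N)) → (k : ℕ) < (l : ℕ)) →
    IsPrimeElemIn (Rk K E.x ((k : ℕ) + 1)) (y j)
  y_complete : ∀ (k : Fin N) (u : R), IsHomog E u →
    IsPrimeElemIn (Rk K E.x ((k : ℕ) + 1)) u →
    ∃ j : Fin N, (j : ℕ) ≤ (k : ℕ) ∧
      (∀ l : Fin N, succIdx η j = (l : WithTop (Fin N)) → (k : ℕ) < (l : ℕ)) ∧
      ∃ t : Kˣ, u = (t : K) • y j

/-! ## Leading terms -/

/-- The reverse lexicographic order `f ≺ g` on exponent vectors. -/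
def revLexLt {N : ℕ} (f g : Fin N → ℕ) : Prop :=
  ∃ n : Fin N, f n < g n ∧ ∀ m : Fin N, n < m → f m = g m

/-- `b` has leading term `t x^f` with respect to the PBW basis and `≺`. -/
def IsLeadingTerm {N : ℕ} (E : CGLExt K R N) (b : R) (t : K) (f : Fin N → ℕ) : Prop :=
  t ≠ 0 ∧ E.pbw.repr b f = t ∧
    ∀ g : Fin N → ℕ, E.pbw.repr b g ≠ 0 → g = f ∨ revLexLt g f

/-! ## Interval prime elements of symmetric CGL extensions -/

/-- The `{0,1}`-vector (as natural numbers) supported on the `η`-chain from `a` to `b`,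
i.e. on `{l : a ≤ l ≤ b, η l = η a}`; for `b = s^m(a)` this is the exponent vector of
`x_a x_{s(a)} ⋯ x_{s^m(a)}`, i.e. `e_{[a,b]}`. -/
noncomputable def chainIndN {N : ℕ} {α : Type} (η : Fin N → α) (a b : Fin N) : Fin N → ℕ :=
  fun l => if a ≤ l ∧ l ≤ b ∧ η l = η a then 1 else 0

/-- Integer version of `chainIndN`, the vector `e_{[a,b]} ∈ ℤ^N`. -/
noncomputable def chainIndZ {N : ℕ} {α : Type} (η : Fin N → α) (a b : Fin N) : Fin N → ℤ :=
  fun l => if a ≤ l ∧ l ≤ b ∧ η l = η a then 1 else 0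

/-- The standard basis vector `e_i ∈ ℤ^N`. -/
def eVecZ {N : ℕ} (i : Fin N) : Fin N → ℤ := fun l => if l = i then 1 else 0

/-- The vector `ē_j = e_j + e_{p(j)} + ⋯ + e_{p^{O_-(j)}(j)} ∈ ℤ^N`. -/
noncomputable def ebarZ {N : ℕ} {α : Type} (η : Fin N → α) (j : Fin N) : Fin N → ℤ :=
  fun l => if l ≤ j ∧ η l = η j then 1 else 0

/-- The interval prime elements `y_{[i, s^m(i)]}` of a symmetric CGL extension
([GYbig, Theorem 5.1]): for all `i` and `m ≥ 0` with `s^m(i) ∈ [1,N]`, the element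
`yI i (s^m(i))` is the unique homogeneous prime element of the interval subalgebra
`R_{[i, s^m(i)]}` with leading term `x_i x_{s(i)} ⋯ x_{s^m(i)}`. -/
structure IntervalYSystem {N : ℕ} (E : SymCGLExt K R N) (Y : YSystem E.toCGLExt) where
  yI : Fin N → Fin N → R
  homog : ∀ i k : Fin N, IsHomog E.toCGLExt (yI i k)
  prime : ∀ (i : Fin N) (m : ℕ) (k : Fin N), succIter Y.η m i = (k : WithTop (Fin N)) →
    IsPrimeElemIn (Rint K E.x (i : ℕ) (k : ℕ)) (yI i k)
  lt : ∀ (i : Fin N) (m : ℕ) (k : Fin N), succIter Y.η m i = (k : WithTop (Fin N)) →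
    IsLeadingTerm E.toCGLExt (yI i k) 1 (chainIndN Y.η i k)

/-- `y_{[j,k]}` extended by the convention `y_{[s(i), i]} = 1`. -/
def yIext {N : ℕ} (E : SymCGLExt K R N) (Y : YSystem E.toCGLExt)
    (YI : IntervalYSystem E Y) (j k : Fin N) : R :=
  if (k : ℕ) < (j : ℕ) then 1 else YI.yI j k

/-- The normal elements `u_{[i,s^m(i)]}` of [GYbig, Corollary 5.11]: here `j = s(i)`,
`k' = s^{m-1}(i)`, `k = s^m(i)` and
`u = y_{[i,k']} y_{[j,k]} - Ω_λ(e_i, e_{[j,k']}) y_{[j,k']} y_{[i,k]}`. -/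
noncomputable def uElem {N : ℕ} (E : SymCGLExt K R N) (Y : YSystem E.toCGLExt)
    (YI : IntervalYSystem E Y) (i j k' k : Fin N) : R :=
  YI.yI i k' * YI.yI j k -
    (omegaU E.lamM (eVecZ i) (chainIndZ Y.η j k') : K) • (yIext E Y YI j k' * YI.yI i k)

/-! ## Conditions (A) and (B) and the normalization condition -/

/-- Condition (A): a choice of square roots `ν_{kl} = √λ_{kl}` in `K` such that the
subgroup of `Kˣ` they generate contains no elements of order 2. -/
structure CondA {N : ℕ} (E : CGLExt K R N) where
  ν : Fin N → Fin N → Kˣ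
  sq : ∀ k j : Fin N, (j : ℕ) < (k : ℕ) → ν k j ^ 2 = E.lamM k j
  diag : ∀ k, ν k k = 1
  skew : ∀ k j, ν j k = (ν k j)⁻¹
  no_order_two : ∀ t ∈ Subgroup.closure {u : Kˣ | ∃ k j : Fin N, u = ν k j},
    t ^ 2 = 1 → t = 1

/-- Condition (B): positive integers `d_n`, `n ∈ η([1,N])`, with
`λ_k^{d_{η(l)}} = λ_l^{d_{η(k)}}` whenever `p(k), p(l) ≠ -∞`. -/
def CondB {N : ℕ} (E : CGLExt K R N) (η : Fin N → ℤ) (d : ℤ → ℕ) : Prop :=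
  (∀ k : Fin N, 0 < d (η k)) ∧
  ∀ k l : Fin N, predIdx η k ≠ ⊥ → predIdx η l ≠ ⊥ →
    E.lam k ^ d (η l) = E.lam l ^ d (η k)

/-- The symmetrization scalar `S_ν(f) = ∏_{j<k} ν_{jk}^{-f_j f_k}`. -/
def Snu {N : ℕ} (ν : Fin N → Fin N → Kˣ) (f : Fin N → ℤ) : Kˣ :=
  ∏ p : Fin N × Fin N,
    if (p.1 : ℕ) < (p.2 : ℕ) then ν p.1 p.2 ^ (-(f p.1 * f p.2)) else 1

/-- The normalization condition (6.6) of [GYbig]: the leading coefficient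
`π_{[i,s(i)]}` of `u_{[i,s(i)]}` equals `S_ν(-e_i + f_{[i,s(i)]})` for all `i` with
`s(i) ≠ +∞`, where `f_{[i,s(i)]}` is the exponent of the leading term of `u_{[i,s(i)]}`. -/
def NormCond {N : ℕ} (E : SymCGLExt K R N) (CA : CondA E.toCGLExt)
    (Y : YSystem E.toCGLExt) (YI : IntervalYSystem E Y) : Prop :=
  ∀ i j : Fin N, succIdx Y.η i = (j : WithTop (Fin N)) →
    ∃ f : Fin N → ℕ,
      IsLeadingTerm E.toCGLExt (uElem E Y YI i j i j)
        ((Snu CA.ν (fun l => (f l : ℤ) - eVecZ i l) : Kˣ) : K) f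

/-! ## D-forms -/

variable (K)

/-- `t` is a unit of the subring `D ⊆ K`. -/
def isUnitIn (D : Subring K) (t : K) : Prop := t ∈ D ∧ t ≠ 0 ∧ t⁻¹ ∈ D

/-- The `D`-subring of `R` generated by `D` and the generators `x i` with `P i`. -/
def Dspan (D : Subring K) {N : ℕ} (x : Fin N → R) (P : Fin N → Prop) : Subring R :=
  Subring.closure ((algebraMap K R) '' (D : Set K) ∪ {r : R | ∃ i : Fin N, P i ∧ r = x i})

/-- `(R_D)_k = D⟨x_1,…,x_k⟩` (0-indexed: indices `< k`). -/
def DRk (D : Subring K) {N : ℕ} (x : Fin N → R) (k : ℕ) : Subring R :=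
  Dspan K D x (fun i => (i : ℕ) < k)

/-- `R_D = D⟨x_1,…,x_N⟩`. -/
def DRfull (D : Subring K) {N : ℕ} (x : Fin N → R) : Subring R :=
  Dspan K D x (fun _ => True)

/-- `(R_D)_{[a,b]} = D⟨x_a,…,x_b⟩` (0-indexed, inclusive). -/
def DRint (D : Subring K) {N : ℕ} (x : Fin N → R) (a b : ℕ) : Subring R :=
  Dspan K D x (fun i => a ≤ (i : ℕ) ∧ (i : ℕ) ≤ b)

variable {K}

/-- `D⟨x_1,…,x_N⟩` is a `D`-form of the CGL presentation `E`, i.e. it is an iterated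
skew polynomial extension `D[x_1][x_2;θ_2,δ_2]⋯[x_N;θ_N,δ_N]`: each `θ_k` restricts
to an automorphism of `D⟨x_1,…,x_{k-1}⟩`, and each `δ_k` maps `D⟨x_1,…,x_{k-1}⟩`
into itself. -/
structure IsDForm (D : Subring K) {N : ℕ} (E : CGLExt K R N) : Prop where
  theta_mem : ∀ k : Fin N, ∀ a ∈ Rk K E.x (k : ℕ),
    a ∈ DRk K D E.x (k : ℕ) → E.θ k a ∈ DRk K D E.x (k : ℕ)
  thetainv_mem : ∀ k : Fin N, ∀ a ∈ Rk K E.x (k : ℕ),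
    a ∈ DRk K D E.x (k : ℕ) → E.θinv k a ∈ DRk K D E.x (k : ℕ)
  delta_mem : ∀ k : Fin N, ∀ a ∈ Rk K E.x (k : ℕ),
    a ∈ DRk K D E.x (k : ℕ) → E.δ k a ∈ DRk K D E.x (k : ℕ)

/-- `D ⊆ K` has `K` as its field of fractions. -/
def IsFractionFieldOf (D : Subring K) : Prop :=
  ∀ z : K, ∃ a ∈ D, ∃ b ∈ D, b ≠ 0 ∧ z = a / b

/-- `p` is a normal element of the subring `S` : `p S = S p`. -/
def IsNormalInSR (S : Subring R) (p : R) : Prop :=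
  (∀ a ∈ S, ∃ b ∈ S, p * a = b * p) ∧ (∀ a ∈ S, ∃ b ∈ S, a * p = p * b)

/-- `T` is a denominator (two-sided Ore) set in the subring `S` of the domain `R`. -/
def IsDenomSetIn (S : Subring R) (T : Submonoid R) : Prop :=
  ((T : Set R) ⊆ (S : Set R)) ∧ (0 : R) ∉ T ∧
  (∀ a ∈ S, ∀ s ∈ T, ∃ b ∈ S, ∃ t ∈ T, t * a = b * s) ∧
  (∀ a ∈ S, ∀ s ∈ T, ∃ b ∈ S, ∃ t ∈ T, a * t = s * b)

/-! ## The permutations `Ξ_N` and `Γ_N` -/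

/-- The set `Ξ_N ⊆ S_N` of permutations `σ` such that `σ([1,k])` is an interval for
all `k`. -/
def XiN {N : ℕ} : Set (Equiv.Perm (Fin N)) :=
  {σ | ∀ k a b c : Fin N, a ≤ k → b ≤ k → σ a ≤ c → c ≤ σ b → ∃ m : Fin N, m ≤ k ∧ σ m = c}

/-- The value at position `k` (0-indexed) of the permutation
`σ_{i,j} = [i+1, …, j, i, j+1, …, N, i-1, …, 1]` (here expressed 0-indexed). -/
def gammaVal (N i j : ℕ) (k : Fin N) : ℕ :=
  if (k : ℕ) < j - i then i + 1 + (k : ℕ)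
  else if (k : ℕ) = j - i then i
  else if (k : ℕ) ≤ N - 1 - i then (k : ℕ) + i
  else N - 1 - (k : ℕ)

/-- The subset `Γ_N = {σ_{i,j} : i ≤ j} ⊆ Ξ_N`. -/
def GammaN {N : ℕ} : Set (Equiv.Perm (Fin N)) :=
  {σ | ∃ i j : ℕ, i ≤ j ∧ j < N ∧ ∀ k : Fin N, (σ k : ℕ) = gammaVal N i j k}

/-!
Every element of `R_D` has all its PBW coefficients in `D`. This is proved by induction on
`k`, together with the fact that a product `x^f x^g` of ordered monomials in `x_1, …, x_k` has
coefficients in `D` and leading term `u x^{f+g}` (for the reverse lexicographic order) with `u`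
a unit of `D`: commuting `x_k^a` past `b ∈ (R_D)_{k-1}` gives `θ_k^a(b) x_k^a` plus terms of
lower degree in `x_k` with coefficients in `(R_D)_{k-1}`, and `θ_k` multiplies each monomial in
`x_1, …, x_{k-1}` by a unit of `D`, because both `θ_k` and `θ_k⁻¹` preserve `R_D`.

Then the recursion `y_k = y_{p(k)} x_k - c_k`, with `c_k ∈ R_{k-1}`, shows that every `y_k`
has a leading term with unit coefficient in `D`. For such a `y`, if `r y` has coefficients in
`D`, then the leading coefficient of `r` is that of `r y` divided by a unit of `D`, hence lies
in `D`; subtracting the leading term of `r` and inducting on the size of its support shows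
`r ∈ R_D`. Units of `D` are handled directly, and `Y` is generated by these two kinds of
elements.
-/

instance (N : ℕ) : IsOrderedCancelAddMonoid (Colex (Fin N → ℕ)) :=
  Pi.Lex.isOrderedAddCancelMonoid (ι := (Fin N)ᵒᵈ)

section PBW

variable {N : ℕ}

lemma toColex_lt_toColex_iff {f g : Fin N → ℕ} :
    toColex f < toColex g ↔ ∃ i, (∀ j, i < j → f j = g j) ∧ f i < g i := Iff.rfl

def vanishingFrom (k : ℕ) : Set (Fin N → ℕ) :=
  {f | ∀ i : Fin N, k ≤ (i : ℕ) → f i = 0}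

lemma vanishingFrom_mono {k l : ℕ} (h : k ≤ l) :
    (vanishingFrom k : Set (Fin N → ℕ)) ⊆ vanishingFrom l :=
  fun _ hf i hi => hf i (h.trans hi)

lemma add_mem_vanishingFrom {k : ℕ} {f g : Fin N → ℕ} (hf : f ∈ vanishingFrom k)
    (hg : g ∈ vanishingFrom k) : f + g ∈ vanishingFrom k :=
  fun i hi => by simp [hf i hi, hg i hi]

lemma mem_vanishingFrom_of_colex_le {k : ℕ} {f w : Fin N → ℕ} (h : toColex f ≤ toColex w)
    (hw : w ∈ vanishingFrom k) : f ∈ vanishingFrom k := by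
  rcases h.lt_or_eq with h | h
  · obtain ⟨n, heq, hlt⟩ := toColex_lt_toColex_iff.1 h
    have hn : (n : ℕ) < k := by
      by_contra hn
      simp [hw n (not_lt.1 hn)] at hlt
    exact fun i hi => (heq i (Fin.lt_def.2 (by omega))).trans (hw i hi)
  · rwa [toColex_inj.1 h]

lemma colex_lt_of_lt_of_vanishingFrom {κ : Fin N} {f w : Fin N → ℕ}
    (hf : f ∈ vanishingFrom ((κ : ℕ) + 1)) (hw : w ∈ vanishingFrom ((κ : ℕ) + 1))
    (hlt : f κ < w κ) :
    toColex f < toColex w :=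
  ⟨κ, fun j hj => (hf j hj).trans (hw j hj).symm, hlt⟩

lemma oMono_add_single (x : Fin N → R) {f : Fin N → ℕ} {κ : Fin N}
    (hf : f ∈ vanishingFrom κ) (n : ℕ) :
    oMono x (f + Pi.single κ n) = oMono x f * x κ ^ n := by
  obtain ⟨l₁, l₂, hl⟩ := List.append_of_mem (List.mem_finRange κ)
  have hsorted := List.pairwise_lt_finRange N
  rw [hl, List.pairwise_append, List.pairwise_cons] at hsorted
  have hl₁ : ∀ j ∈ l₁, j ≠ κ := fun j hj => (hsorted.2.2 j hj κ List.mem_cons_self).ne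
  have hl₂ : ∀ j ∈ l₂, κ < j := hsorted.2.1.1
  have htail : ∀ g : Fin N → ℕ, (∀ j, κ < j → g j = 0) →
      (l₂.map fun i => x i ^ g i).prod = 1 :=
    fun g hg => List.prod_eq_one fun r hr => by
      obtain ⟨j, hj, rfl⟩ := List.mem_map.1 hr
      rw [hg j (hl₂ j hj), pow_zero]
  unfold oMono
  rw [hl]
  simp only [List.map_append, List.map_cons, List.prod_append, List.prod_cons]
  rw [htail f fun j hj => hf j hj.le, htail _ fun j hj => by simp [hf j hj.le, hj.ne'],
    List.map_congr_left (g := fun i => x i ^ f i) fun j hj => by simp [hl₁ j hj]]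
  simp [hf κ le_rfl]

variable (E : CGLExt K R N) (D : Subring K)

lemma pbw_add_single {f : Fin N → ℕ} {κ : Fin N} (hf : f ∈ vanishingFrom κ) (n : ℕ) :
    E.pbw (f + Pi.single κ n) = E.pbw f * E.x κ ^ n := by
  rw [E.pbw_eq, E.pbw_eq, oMono_add_single E.x hf]

lemma pbw_zero : E.pbw 0 = 1 := by
  simp [E.pbw_eq, oMono]

lemma pbw_single (κ : Fin N) : E.pbw (Pi.single κ 1) = E.x κ := by
  simpa [pbw_zero] using pbw_add_single E (f := 0) (κ := κ) (fun _ _ => rfl) 1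

lemma algebraMap_eq_smul_pbw_zero (t : K) : algebraMap K R t = t • E.pbw 0 := by
  rw [pbw_zero, Algebra.algebraMap_eq_smul_one]

def pbwLattice : Submodule D R := Submodule.span D (Set.range E.pbw)

noncomputable def pbwSupported (S : Set (Fin N → ℕ)) : Submodule K R :=
  (Finsupp.supported K K S).comap (E.pbw.repr : R →ₗ[K] (Fin N → ℕ) →₀ K)

lemma mul_eq_sum_pbw_mul (a b : R) :
    a * b = ∑ f ∈ (E.pbw.repr a).support, ∑ g ∈ (E.pbw.repr b).support,
      (E.pbw.repr a f * E.pbw.repr b g) • (E.pbw f * E.pbw g) := by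
  conv_lhs => rw [← E.pbw.linearCombination_repr a, ← E.pbw.linearCombination_repr b]
  simp only [Finsupp.linearCombination_apply, Finsupp.sum, Finset.sum_mul, Finset.mul_sum,
    smul_mul_smul_comm]
  exact Finset.sum_comm

variable {E D}

lemma mem_pbwLattice_iff {r : R} : r ∈ pbwLattice E D ↔ ∀ f, E.pbw.repr r f ∈ D := by
  rw [pbwLattice, Module.Basis.mem_span_iff_repr_mem]
  exact forall_congr' fun f => ⟨fun ⟨a, ha⟩ => ha ▸ a.2, fun h => ⟨⟨_, h⟩, rfl⟩⟩

lemma mem_pbwSupported_iff {S : Set (Fin N → ℕ)} {r : R} :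
    r ∈ pbwSupported E S ↔ ∀ f, E.pbw.repr r f ≠ 0 → f ∈ S := by
  simp [pbwSupported, Finsupp.mem_supported, Set.subset_def]

lemma mem_of_mem_pbwSupported {S : Set (Fin N → ℕ)} {r : R} (hr : r ∈ pbwSupported E S)
    {f : Fin N → ℕ} (hf : f ∈ (E.pbw.repr r).support) : f ∈ S :=
  mem_pbwSupported_iff.1 hr f (Finsupp.mem_support_iff.1 hf)

lemma repr_eq_zero_of_mem_pbwSupported {S : Set (Fin N → ℕ)} {r : R} {f : Fin N → ℕ}
    (hr : r ∈ pbwSupported E S) (hf : f ∉ S) : E.pbw.repr r f = 0 :=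
  not_imp_comm.1 (mem_pbwSupported_iff.1 hr f) hf

lemma pbwSupported_mono {S T : Set (Fin N → ℕ)} (h : S ⊆ T) :
    pbwSupported E S ≤ pbwSupported E T :=
  Submodule.comap_mono (Finsupp.supported_mono h)

lemma pbw_mem_pbwLattice (f : Fin N → ℕ) : E.pbw f ∈ pbwLattice E D :=
  Submodule.subset_span ⟨f, rfl⟩

lemma pbw_mem_pbwSupported {S : Set (Fin N → ℕ)} {f : Fin N → ℕ} (hf : f ∈ S) :
    E.pbw f ∈ pbwSupported E S :=
  mem_pbwSupported_iff.2 fun g hg => by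
    rw [E.pbw.repr_self, Finsupp.single_apply] at hg
    split_ifs at hg with h
    exacts [h ▸ hf, absurd rfl hg]

lemma smul_mem_pbwLattice {c : K} (hc : c ∈ D) {r : R} (hr : r ∈ pbwLattice E D) :
    c • r ∈ pbwLattice E D :=
  Submodule.smul_mem _ (⟨c, hc⟩ : D) hr

lemma x_mem_DRfull (i : Fin N) : E.x i ∈ DRfull K D E.x :=
  Subring.subset_closure (Or.inr ⟨i, trivial, rfl⟩)

lemma algebraMap_mem_DRfull {t : K} (ht : t ∈ D) : algebraMap K R t ∈ DRfull K D E.x :=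
  Subring.subset_closure (Or.inl ⟨t, ht, rfl⟩)

lemma pbwLattice_subset_DRfull : (pbwLattice E D : Set R) ⊆ DRfull K D E.x := by
  intro r hr
  induction hr using Submodule.span_induction with
  | mem r hr =>
    obtain ⟨f, rfl⟩ := hr
    rw [E.pbw_eq]
    exact Subring.list_prod_mem _ fun r hr => by
      obtain ⟨i, -, rfl⟩ := List.mem_map.1 hr
      exact pow_mem (x_mem_DRfull i) _
  | zero => exact zero_mem _
  | add a b _ _ ha hb => exact add_mem ha hb
  | smul c a _ ha =>
    rw [Subring.smul_def, Algebra.smul_def]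
    exact mul_mem (algebraMap_mem_DRfull c.2) ha

lemma mul_mem_of_pbw_mul_mem {M : Submodule K R} {S T : Set (Fin N → ℕ)}
    (h : ∀ f ∈ S, ∀ g ∈ T, E.pbw f * E.pbw g ∈ M) {a b : R}
    (ha : a ∈ pbwSupported E S) (hb : b ∈ pbwSupported E T) : a * b ∈ M := by
  rw [mul_eq_sum_pbw_mul E]
  refine Submodule.sum_mem _ fun f hf => Submodule.sum_mem _ fun g hg => M.smul_mem _ ?_
  exact h f (mem_of_mem_pbwSupported ha hf) g (mem_of_mem_pbwSupported hb hg)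

lemma mul_mem_of_pbw_mul_mem_lattice {L : Submodule D R} {S T : Set (Fin N → ℕ)}
    (h : ∀ f ∈ S, ∀ g ∈ T, E.pbw f * E.pbw g ∈ L) {a b : R}
    (ha : a ∈ pbwLattice E D) (ha' : a ∈ pbwSupported E S)
    (hb : b ∈ pbwLattice E D) (hb' : b ∈ pbwSupported E T) : a * b ∈ L := by
  rw [mul_eq_sum_pbw_mul E]
  refine Submodule.sum_mem _ fun f hf => Submodule.sum_mem _ fun g hg => ?_
  have hfg : E.pbw.repr a f * E.pbw.repr b g ∈ D :=
    mul_mem (mem_pbwLattice_iff.1 ha f) (mem_pbwLattice_iff.1 hb g)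
  exact L.smul_mem (⟨_, hfg⟩ : D)
    (h f (mem_of_mem_pbwSupported ha' hf) g (mem_of_mem_pbwSupported hb' hg))

lemma isUnitIn_one : isUnitIn K D 1 := ⟨D.one_mem, one_ne_zero, by simp⟩

lemma isUnitIn.mul {s t : K} (hs : isUnitIn K D s) (ht : isUnitIn K D t) :
    isUnitIn K D (s * t) :=
  ⟨mul_mem hs.1 ht.1, mul_ne_zero hs.2.1 ht.2.1, by rw [mul_inv]; exact mul_mem hs.2.2 ht.2.2⟩

lemma isUnitIn.pow {s : K} (hs : isUnitIn K D s) (n : ℕ) : isUnitIn K D (s ^ n) := by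
  induction n with
  | zero => simpa using isUnitIn_one
  | succ n ih => rw [pow_succ]; exact ih.mul hs

variable (E D) in
/-- Leading terms are for the reverse lexicographic order `≺` of the paper, i.e. `toColex`. -/
structure HasUnitLeadingTerm (w : Fin N → ℕ) (r : R) : Prop where
  mem_pbwLattice : r ∈ pbwLattice E D
  mem_pbwSupported : r ∈ pbwSupported E (toColex ⁻¹' Set.Iic (toColex w))
  isUnitIn_repr : isUnitIn K D (E.pbw.repr r w)

lemma hasUnitLeadingTerm_pbw (f : Fin N → ℕ) : HasUnitLeadingTerm E D f (E.pbw f) :=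
  ⟨pbw_mem_pbwLattice f, pbw_mem_pbwSupported (le_refl (toColex f)),
    by simpa using isUnitIn_one⟩

lemma HasUnitLeadingTerm.smul {w : Fin N → ℕ} {r : R} (h : HasUnitLeadingTerm E D w r) {c : K}
    (hc : isUnitIn K D c) : HasUnitLeadingTerm E D w (c • r) :=
  ⟨smul_mem_pbwLattice hc.1 h.1, Submodule.smul_mem _ _ h.2, by simpa using hc.mul h.3⟩

lemma HasUnitLeadingTerm.add_of_lt {w : Fin N → ℕ} {a b : R} (ha : HasUnitLeadingTerm E D w a)
    (hb : b ∈ pbwLattice E D) (hb' : b ∈ pbwSupported E (toColex ⁻¹' Set.Iio (toColex w))) :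
    HasUnitLeadingTerm E D w (a + b) := by
  refine ⟨add_mem ha.1 hb,
    add_mem ha.2 (pbwSupported_mono (Set.preimage_mono Set.Iio_subset_Iic_self) hb'), ?_⟩
  rw [map_add, Finsupp.add_apply, repr_eq_zero_of_mem_pbwSupported hb' (lt_irrefl (toColex w)),
    add_zero]
  exact ha.3

lemma HasUnitLeadingTerm.sub_of_lt {w : Fin N → ℕ} {a b : R} (ha : HasUnitLeadingTerm E D w a)
    (hb : b ∈ pbwLattice E D) (hb' : b ∈ pbwSupported E (toColex ⁻¹' Set.Iio (toColex w))) :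
    HasUnitLeadingTerm E D w (a - b) := by
  rw [sub_eq_add_neg]
  exact ha.add_of_lt (neg_mem hb) (neg_mem hb')

lemma repr_mul_x_pow {a : R} {κ : Fin N} (ha : a ∈ pbwSupported E (vanishingFrom κ)) (n : ℕ) :
    E.pbw.repr (a * E.x κ ^ n) = (E.pbw.repr a).mapDomain (· + Pi.single κ n) := by
  conv_lhs => rw [← E.pbw.linearCombination_repr a]
  rw [Finsupp.linearCombination_apply, Finsupp.sum_mul, map_finsuppSum, Finsupp.mapDomain]
  refine Finsupp.sum_congr fun f hf => ?_
  rw [smul_mul_assoc, ← pbw_add_single E (mem_of_mem_pbwSupported ha hf),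
    map_smul, E.pbw.repr_self, Finsupp.smul_single, smul_eq_mul, mul_one]

lemma mul_x_pow_mem_pbwLattice {a : R} {κ : Fin N} (ha : a ∈ pbwLattice E D)
    (ha' : a ∈ pbwSupported E (vanishingFrom κ)) (n : ℕ) :
    a * E.x κ ^ n ∈ pbwLattice E D := by
  refine mem_pbwLattice_iff.2 fun e => ?_
  rw [repr_mul_x_pow ha']
  by_cases he : e ∈ Set.range fun f : Fin N → ℕ => f + Pi.single κ n
  · obtain ⟨g, rfl⟩ := he
    rw [Finsupp.mapDomain_apply (add_left_injective _)]
    exact mem_pbwLattice_iff.1 ha g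
  · rw [Finsupp.mapDomain_of_notMem_range _ _ he]
    exact zero_mem D

lemma mul_x_pow_mem_pbwSupported {a : R} {κ : Fin N} {S : Set (Fin N → ℕ)}
    (ha : a ∈ pbwSupported E (vanishingFrom κ)) (ha' : a ∈ pbwSupported E S) (n : ℕ) :
    a * E.x κ ^ n ∈ pbwSupported E ((fun f : Fin N → ℕ => f + Pi.single κ n) '' S) := by
  refine mem_pbwSupported_iff.2 fun e he => ?_
  rw [repr_mul_x_pow ha] at he
  obtain ⟨g, hg, rfl⟩ :=
    Finset.mem_image.1 (Finsupp.mapDomain_support (Finsupp.mem_support_iff.2 he))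
  exact ⟨g, mem_of_mem_pbwSupported ha' hg, rfl⟩

lemma HasUnitLeadingTerm.mul_x_pow {w : Fin N → ℕ} {a : R} (h : HasUnitLeadingTerm E D w a)
    {κ : Fin N} (hw : w ∈ vanishingFrom κ) (n : ℕ) :
    HasUnitLeadingTerm E D (w + Pi.single κ n) (a * E.x κ ^ n) := by
  have ha : a ∈ pbwSupported E (vanishingFrom κ) :=
    pbwSupported_mono (fun _ hf => mem_vanishingFrom_of_colex_le hf hw) h.2
  refine ⟨mul_x_pow_mem_pbwLattice h.1 ha n,
    pbwSupported_mono ?_ (mul_x_pow_mem_pbwSupported ha h.2 n), ?_⟩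
  · rintro _ ⟨f, hf, rfl⟩
    exact add_le_add_left hf (toColex (Pi.single κ n : Fin N → ℕ))
  · rw [repr_mul_x_pow ha, Finsupp.mapDomain_apply (add_left_injective _)]
    exact h.3

end PBW

section Ore

variable {N : ℕ} {E : CGLExt K R N} {D : Subring K}

lemma single_mem_vanishingFrom {i : Fin N} {k : ℕ} (hi : (i : ℕ) < k) (n : ℕ) :
    Pi.single i n ∈ vanishingFrom k :=
  fun j hj => by rw [Pi.single_apply, if_neg fun h => by subst h; omega]

lemma exists_eq_add_single {κ : Fin N} {f : Fin N → ℕ}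
    (hf : f ∈ vanishingFrom ((κ : ℕ) + 1)) :
    ∃ f' ∈ vanishingFrom (κ : ℕ), f = f' + Pi.single κ (f κ) := by
  refine ⟨Function.update f κ 0, fun i hi => ?_, funext fun i => ?_⟩
  · rcases eq_or_ne i κ with rfl | h
    · simp
    · rw [Function.update_of_ne h]
      exact hf i (by have := Fin.val_ne_of_ne h; omega)
  · rcases eq_or_ne i κ with rfl | h
    · simp
    · simp [h]

lemma x_mem_Rk {i : Fin N} {k : ℕ} (hi : (i : ℕ) < k) : E.x i ∈ Rk K E.x k :=
  Algebra.subset_adjoin ⟨i, hi, rfl⟩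

lemma x_mem_DRk {i : Fin N} {k : ℕ} (hi : (i : ℕ) < k) : E.x i ∈ DRk K D E.x k :=
  Subring.subset_closure (Or.inr ⟨i, hi, rfl⟩)

lemma DRk_subset_Rk (k : ℕ) : (DRk K D E.x k : Set R) ⊆ Rk K E.x k :=
  (Subring.closure_le (t := (Rk K E.x k).toSubring)).2 <| Set.union_subset
    (by rintro _ ⟨t, -, rfl⟩; exact (Rk K E.x k).algebraMap_mem t)
    (by rintro _ ⟨i, hi, rfl⟩; exact x_mem_Rk hi)

lemma pbw_mem_DRk {k : ℕ} {g : Fin N → ℕ} (hg : g ∈ vanishingFrom k) :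
    E.pbw g ∈ DRk K D E.x k := by
  rw [E.pbw_eq]
  refine Subring.list_prod_mem _ fun r hr => ?_
  obtain ⟨i, -, rfl⟩ := List.mem_map.1 hr
  by_cases hi : (i : ℕ) < k
  · exact pow_mem (x_mem_DRk hi) _
  · rw [hg i (not_lt.1 hi), pow_zero]
    exact one_mem _

lemma DRfull_eq_DRk : DRfull K D E.x = DRk K D E.x N := by
  simp [DRfull, DRk, Dspan]

variable (E D) in
def UnitLeadingProducts (k : ℕ) : Prop :=
  ∀ f ∈ vanishingFrom k, ∀ g ∈ vanishingFrom k,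
    HasUnitLeadingTerm E D (f + g) (E.pbw f * E.pbw g)

lemma Rk_subset_pbwSupported {k : ℕ} (hP : UnitLeadingProducts E D k) :
    (Rk K E.x k : Set R) ⊆ pbwSupported E (vanishingFrom k) := by
  intro r hr
  induction hr using Algebra.adjoin_induction with
  | mem r hr =>
    obtain ⟨i, hi, rfl⟩ := hr
    rw [← pbw_single]
    exact pbw_mem_pbwSupported (single_mem_vanishingFrom hi 1)
  | algebraMap t =>
    rw [algebraMap_eq_smul_pbw_zero]
    exact Submodule.smul_mem _ _ (pbw_mem_pbwSupported fun _ _ => rfl)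
  | add a b _ _ ha hb => exact add_mem ha hb
  | mul a b _ _ ha hb =>
    refine mul_mem_of_pbw_mul_mem (fun f hf g hg => ?_) ha hb
    exact pbwSupported_mono (fun e he => mem_vanishingFrom_of_colex_le he
      (add_mem_vanishingFrom hf hg)) (hP f hf g hg).2

lemma DRk_subset_pbwLattice {k : ℕ} (hP : UnitLeadingProducts E D k) :
    (DRk K D E.x k : Set R) ⊆ pbwLattice E D := by
  intro r hr
  induction hr using Subring.closure_induction with
  | mem r hr =>
    rcases hr with ⟨t, ht, rfl⟩ | ⟨i, -, rfl⟩
    · rw [algebraMap_eq_smul_pbw_zero]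
      exact smul_mem_pbwLattice ht (pbw_mem_pbwLattice 0)
    · rw [← pbw_single]
      exact pbw_mem_pbwLattice _
  | zero => exact zero_mem _
  | one => rw [← pbw_zero E]; exact pbw_mem_pbwLattice 0
  | add a b _ _ ha hb => exact add_mem ha hb
  | neg a _ ha => exact neg_mem ha
  | mul a b ha' hb' ha hb =>
    exact mul_mem_of_pbw_mul_mem_lattice (fun f hf g hg => (hP f hf g hg).1)
      ha (Rk_subset_pbwSupported hP (DRk_subset_Rk k ha'))
      hb (Rk_subset_pbwSupported hP (DRk_subset_Rk k hb'))

lemma repr_x_single (j : Fin N) : E.pbw.repr (E.x j) (Pi.single j 1) = 1 := by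
  simp [← pbw_single]

lemma isUnitIn_lamM (hD : IsDForm D E) {κ : Fin N} (hP : UnitLeadingProducts E D κ)
    {j : Fin N} (hj : (j : ℕ) < κ) : isUnitIn K D (E.lamM κ j) := by
  have hxR := x_mem_Rk (E := E) hj
  have hxD := x_mem_DRk (E := E) (D := D) hj
  have hθ : E.θ κ (E.x j) = (E.lamM κ j : K) • E.x j := by
    rw [← E.hElt_theta κ _ hxR, E.lamM_spec κ j hj]
  have hθinv : E.θinv κ (E.x j) = (E.lamM κ j : K)⁻¹ • E.x j := by
    have hmem := Subalgebra.smul_mem _ hxR (E.lamM κ j : K)⁻¹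
    have := E.θ_left_inv κ _ hmem
    rwa [← E.hElt_theta κ _ hmem, map_smul, E.lamM_spec κ j hj, smul_smul,
      inv_mul_cancel₀ (Units.ne_zero _), one_smul] at this
  refine ⟨?_, Units.ne_zero _, ?_⟩
  · simpa [hθ, repr_x_single] using mem_pbwLattice_iff.1
      (DRk_subset_pbwLattice hP (hD.theta_mem κ _ hxR hxD)) (Pi.single j 1)
  · simpa [hθinv, repr_x_single] using mem_pbwLattice_iff.1
      (DRk_subset_pbwLattice hP (hD.thetainv_mem κ _ hxR hxD)) (Pi.single j 1)

lemma exists_act_hElt_pbw_eq_smul (hD : IsDForm D E) {κ : Fin N} (hP : UnitLeadingProducts E D κ)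
    {g : Fin N → ℕ} (hg : g ∈ vanishingFrom κ) :
    ∃ μ, isUnitIn K D μ ∧ E.act (E.hElt κ) (E.pbw g) = μ • E.pbw g := by
  rw [E.pbw_eq, oMono]
  refine List.prod_induction (fun r => ∃ μ, isUnitIn K D μ ∧ E.act (E.hElt κ) r = μ • r)
    ?_ ⟨1, isUnitIn_one, by simp⟩ ?_
  · rintro a b ⟨μ, hμ, ha⟩ ⟨ν, hν, hb⟩
    exact ⟨μ * ν, hμ.mul hν, by rw [map_mul, ha, hb, smul_mul_smul_comm]⟩
  · intro r hr
    obtain ⟨i, -, rfl⟩ := List.mem_map.1 hr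
    by_cases hi : (i : ℕ) < κ
    · exact ⟨_, (isUnitIn_lamM hD hP hi).pow (g i),
        by rw [map_pow, E.lamM_spec κ i hi, smul_pow]⟩
    · exact ⟨1, isUnitIn_one, by simp [hg i (not_lt.1 hi)]⟩

lemma exists_theta_iterate_pbw_eq_smul (hD : IsDForm D E) {κ : Fin N}
    (hP : UnitLeadingProducts E D κ) {g : Fin N → ℕ} (hg : g ∈ vanishingFrom κ) (n : ℕ) :
    ∃ μ, isUnitIn K D μ ∧ (E.θ κ)^[n] (E.pbw g) = μ • E.pbw g := by
  obtain ⟨μ, hμ, hact⟩ := exists_act_hElt_pbw_eq_smul hD hP hg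
  have hgR : E.pbw g ∈ Rk K E.x κ := DRk_subset_Rk (D := D) _ (pbw_mem_DRk hg)
  refine ⟨μ ^ n, hμ.pow n, ?_⟩
  induction n with
  | zero => simp
  | succ n ih =>
    rw [Function.iterate_succ_apply', ih, ← E.hElt_theta κ _ (Subalgebra.smul_mem _ hgR _),
      map_smul, hact, smul_smul, pow_succ]

lemma theta_iterate_mem_DRk (hD : IsDForm D E) {κ : Fin N} {b : R}
    (hb : b ∈ DRk K D E.x κ) (n : ℕ) : (E.θ κ)^[n] b ∈ DRk K D E.x κ := by
  induction n with
  | zero => exact hb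
  | succ n ih =>
    rw [Function.iterate_succ_apply']
    exact hD.theta_mem κ _ (DRk_subset_Rk _ ih) ih

variable (E D) in
def lowerPowSpan (κ : Fin N) (n : ℕ) : AddSubgroup R :=
  AddSubgroup.closure {r | ∃ c ∈ DRk K D E.x κ, ∃ i < n, r = c * E.x κ ^ i}

lemma mul_x_pow_mem_lowerPowSpan {κ : Fin N} {c : R} (hc : c ∈ DRk K D E.x κ) {i n : ℕ}
    (hi : i < n) : c * E.x κ ^ i ∈ lowerPowSpan E D κ n :=
  AddSubgroup.subset_closure ⟨c, hc, i, hi, rfl⟩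

lemma x_mul_mem_lowerPowSpan (hD : IsDForm D E) {κ : Fin N} {n : ℕ} {m : R}
    (hm : m ∈ lowerPowSpan E D κ n) : E.x κ * m ∈ lowerPowSpan E D κ (n + 1) := by
  induction hm using AddSubgroup.closure_induction with
  | mem r hr =>
    obtain ⟨c, hc, i, hi, rfl⟩ := hr
    have hcR := DRk_subset_Rk κ hc
    rw [← mul_assoc, E.ore κ c hcR, add_mul, mul_assoc, ← pow_succ']
    exact add_mem (mul_x_pow_mem_lowerPowSpan (hD.theta_mem κ c hcR hc) (by omega))
      (mul_x_pow_mem_lowerPowSpan (hD.delta_mem κ c hcR hc) (by omega))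
  | zero => simp
  | add a b _ _ ha hb => rw [mul_add]; exact add_mem ha hb
  | neg a _ ha => rw [mul_neg]; exact neg_mem ha

lemma x_pow_mul_sub_mem_lowerPowSpan (hD : IsDForm D E) {κ : Fin N} {b : R}
    (hb : b ∈ DRk K D E.x κ) (n : ℕ) :
    E.x κ ^ n * b - (E.θ κ)^[n] b * E.x κ ^ n ∈ lowerPowSpan E D κ n := by
  induction n with
  | zero => simp
  | succ n ih =>
    have hb' := theta_iterate_mem_DRk hD hb n
    have hb'R := DRk_subset_Rk κ hb'
    have hsplit : E.x κ ^ (n + 1) * b - (E.θ κ)^[n + 1] b * E.x κ ^ (n + 1) =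
        E.x κ * (E.x κ ^ n * b - (E.θ κ)^[n] b * E.x κ ^ n) +
          E.δ κ ((E.θ κ)^[n] b) * E.x κ ^ n := by
      rw [mul_sub, ← mul_assoc (E.x κ) ((E.θ κ)^[n] b), E.ore κ _ hb'R,
        Function.iterate_succ_apply', pow_succ']
      noncomm_ring
    rw [hsplit]
    exact add_mem (x_mul_mem_lowerPowSpan hD ih)
      (mul_x_pow_mem_lowerPowSpan (hD.delta_mem κ _ hb'R hb') (Nat.lt_succ_self n))

end Ore

section Products

variable {N : ℕ} {E : CGLExt K R N} {D : Subring K}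

lemma pbw_mul_mul_x_pow_mem_of_mem_lowerPowSpan {κ : Fin N} (hP : UnitLeadingProducts E D κ)
    {f v : Fin N → ℕ} (hf : f ∈ vanishingFrom κ) (hv : v ∈ vanishingFrom ((κ : ℕ) + 1))
    {a b : ℕ} (hab : a + b ≤ v κ) {m : R} (hm : m ∈ lowerPowSpan E D κ a) :
    E.pbw f * m * E.x κ ^ b ∈ pbwLattice E D ⊓
      (pbwSupported E (toColex ⁻¹' Set.Iio (toColex v))).restrictScalars D := by
  induction hm using AddSubgroup.closure_induction with
  | mem r hr =>
    obtain ⟨c, hc, i, hi, rfl⟩ := hr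
    have hfc : E.pbw f * c ∈ DRk K D E.x κ := mul_mem (pbw_mem_DRk hf) hc
    have hfcS := Rk_subset_pbwSupported hP (DRk_subset_Rk _ hfc)
    rw [mul_assoc, mul_assoc, ← pow_add, ← mul_assoc]
    refine Submodule.mem_inf.2
      ⟨mul_x_pow_mem_pbwLattice (DRk_subset_pbwLattice hP hfc) hfcS _,
      pbwSupported_mono ?_ (mul_x_pow_mem_pbwSupported hfcS hfcS _)⟩
    rintro _ ⟨e, he, rfl⟩
    have hei : e + Pi.single κ (i + b) ∈ vanishingFrom ((κ : ℕ) + 1) :=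
      add_mem_vanishingFrom (vanishingFrom_mono (Nat.le_succ _) he)
        (single_mem_vanishingFrom (Nat.lt_succ_self _) _)
    refine colex_lt_of_lt_of_vanishingFrom hei hv ?_
    simp [he κ le_rfl]
    omega
  | zero => simp
  | add m m' _ _ hm hm' => rw [mul_add, add_mul]; exact add_mem hm hm'
  | neg m _ hm => rw [mul_neg, neg_mul]; exact neg_mem hm

lemma unitLeadingProducts_zero : UnitLeadingProducts E D 0 := by
  intro f hf g hg
  obtain rfl : f = 0 := funext fun i => hf i (Nat.zero_le _)
  obtain rfl : g = 0 := funext fun i => hg i (Nat.zero_le _)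
  simpa [pbw_zero] using hasUnitLeadingTerm_pbw (E := E) (D := D) 0

lemma unitLeadingProducts_succ (hD : IsDForm D E) {k : ℕ} (hk : k < N)
    (hP : UnitLeadingProducts E D k) : UnitLeadingProducts E D (k + 1) := by
  set κ : Fin N := ⟨k, hk⟩
  intro f hf g hg
  obtain ⟨f', hf', hfeq⟩ := exists_eq_add_single (κ := κ) hf
  obtain ⟨g', hg', hgeq⟩ := exists_eq_add_single (κ := κ) hg
  set a := f κ
  set b := g κ
  obtain ⟨μ, hμ, hθ⟩ := exists_theta_iterate_pbw_eq_smul hD hP hg' a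
  have hm := x_pow_mul_sub_mem_lowerPowSpan hD (pbw_mem_DRk (D := D) hg') a
  have hexp : f + g = f' + g' + Pi.single κ (a + b) := by
    rw [hfeq, hgeq, Pi.single_add]
    abel
  have hprod : E.pbw f * E.pbw g = μ • (E.pbw f' * E.pbw g' * E.x κ ^ (a + b)) +
      E.pbw f' * (E.x κ ^ a * E.pbw g' - (E.θ κ)^[a] (E.pbw g') * E.x κ ^ a) * E.x κ ^ b := by
    rw [hfeq, hgeq, pbw_add_single E hf', pbw_add_single E hg', hθ]
    simp only [pow_add, mul_sub, sub_mul, smul_mul_assoc, mul_smul_comm, mul_assoc]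
    abel
  have hlow := Submodule.mem_inf.1 <| pbw_mul_mul_x_pow_mem_of_mem_lowerPowSpan hP hf'
    (add_mem_vanishingFrom hf hg) le_rfl hm
  rw [hprod, hexp]
  exact (((hP f' hf' g' hg').mul_x_pow (add_mem_vanishingFrom hf' hg') (a + b)).smul hμ).add_of_lt
    hlow.1 (hexp ▸ hlow.2)

lemma unitLeadingProducts (hD : IsDForm D E) {k : ℕ} (hk : k ≤ N) :
    UnitLeadingProducts E D k := by
  induction k with
  | zero => exact unitLeadingProducts_zero
  | succ k ih => exact unitLeadingProducts_succ hD hk (ih (Nat.le_of_succ_le hk))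

lemma mem_vanishingFrom_of_le (f : Fin N → ℕ) {k : ℕ} (hk : N ≤ k) :
    f ∈ vanishingFrom k :=
  fun i hi => absurd (i.2.trans_le hk) (not_lt.2 hi)

lemma hasUnitLeadingTerm_pbw_mul (hD : IsDForm D E) (f g : Fin N → ℕ) :
    HasUnitLeadingTerm E D (f + g) (E.pbw f * E.pbw g) :=
  unitLeadingProducts hD le_rfl f (mem_vanishingFrom_of_le f le_rfl)
    g (mem_vanishingFrom_of_le g le_rfl)

lemma coe_DRfull_eq_pbwLattice (hD : IsDForm D E) : (DRfull K D E.x : Set R) = pbwLattice E D :=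
  Set.Subset.antisymm (DRfull_eq_DRk (D := D) (E := E) ▸
    DRk_subset_pbwLattice (unitLeadingProducts hD le_rfl)) pbwLattice_subset_DRfull

lemma mul_mem_pbwSupported (hD : IsDForm D E) {S T U : Set (Fin N → ℕ)}
    (hU : ∀ f ∈ S, ∀ g ∈ T, ∀ e, toColex e ≤ toColex (f + g) → e ∈ U) {a b : R}
    (ha : a ∈ pbwSupported E S) (hb : b ∈ pbwSupported E T) : a * b ∈ pbwSupported E U :=
  mul_mem_of_pbw_mul_mem (fun f hf g hg =>
    pbwSupported_mono (hU f hf g hg) (hasUnitLeadingTerm_pbw_mul (D := D) hD f g).2) ha hb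

lemma sub_smul_pbw_mem_pbwSupported_Iio {w : Fin N → ℕ} {a : R}
    (ha : a ∈ pbwSupported E (toColex ⁻¹' Set.Iic (toColex w))) :
    a - E.pbw.repr a w • E.pbw w ∈ pbwSupported E (toColex ⁻¹' Set.Iio (toColex w)) := by
  refine mem_pbwSupported_iff.2 fun e he => ?_
  rw [map_sub, map_smul, E.pbw.repr_self, Finsupp.sub_apply, Finsupp.smul_apply,
    Finsupp.single_apply] at he
  rcases eq_or_ne w e with rfl | hne
  · simp at he
  · rw [if_neg hne, smul_zero, sub_zero] at he
    exact lt_of_le_of_ne (mem_pbwSupported_iff.1 ha e he) (fun h => hne (toColex_inj.1 h).symm)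

lemma repr_mul_of_mem_Iic (hD : IsDForm D E) {w w' : Fin N → ℕ} {a b : R}
    (ha : a ∈ pbwSupported E (toColex ⁻¹' Set.Iic (toColex w)))
    (hb : b ∈ pbwSupported E (toColex ⁻¹' Set.Iic (toColex w'))) :
    E.pbw.repr (a * b) (w + w') =
      E.pbw.repr a w * E.pbw.repr b w' * E.pbw.repr (E.pbw w * E.pbw w') (w + w') := by
  set A := E.pbw.repr a w
  set B := E.pbw.repr b w'
  have hsplit : a * b = (A * B) • (E.pbw w * E.pbw w') +
      (A • E.pbw w * (b - B • E.pbw w') + (a - A • E.pbw w) * b) := by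
    simp only [mul_sub, sub_mul, smul_mul_smul_comm]
    abel
  have hlow : A • E.pbw w * (b - B • E.pbw w') + (a - A • E.pbw w) * b ∈
      pbwSupported E (toColex ⁻¹' Set.Iio (toColex (w + w'))) := by
    refine add_mem (mul_mem_pbwSupported hD ?_ (Submodule.smul_mem _ A
        (pbw_mem_pbwSupported (Set.mem_singleton w))) (sub_smul_pbw_mem_pbwSupported_Iio hb))
      (mul_mem_pbwSupported hD ?_ (sub_smul_pbw_mem_pbwSupported_Iio ha) hb)
    · rintro f rfl g (hg : toColex g < toColex w') e he
      exact he.trans_lt (add_lt_add_right hg (toColex f))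
    · rintro f (hf : toColex f < toColex w) g (hg : toColex g ≤ toColex w') e he
      exact he.trans_lt (add_lt_add_of_lt_of_le hf hg)
  rw [hsplit, E.pbw.repr.map_add, Finsupp.add_apply,
    repr_eq_zero_of_mem_pbwSupported hlow (lt_irrefl (toColex (w + w'))), add_zero, map_smul,
    Finsupp.smul_apply, smul_eq_mul]

lemma HasUnitLeadingTerm.mul (hD : IsDForm D E) {w w' : Fin N → ℕ} {a b : R}
    (ha : HasUnitLeadingTerm E D w a) (hb : HasUnitLeadingTerm E D w' b) :
    HasUnitLeadingTerm E D (w + w') (a * b) := by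
  refine ⟨?_, mul_mem_pbwSupported hD ?_ ha.2 hb.2, ?_⟩
  · exact mul_mem_of_pbw_mul_mem_lattice (fun f _ g _ => (hasUnitLeadingTerm_pbw_mul hD f g).1)
      ha.1 ha.2 hb.1 hb.2
  · rintro f (hf : toColex f ≤ toColex w) g (hg : toColex g ≤ toColex w') e he
    exact he.trans (add_le_add hf hg)
  · rw [repr_mul_of_mem_Iic hD ha.2 hb.2]
    exact (ha.3.mul hb.3).mul (hasUnitLeadingTerm_pbw_mul hD w w').3

end Products

section Localization

variable {N : ℕ} {E : CGLExt K R N} {D : Subring K}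

lemma predIdx_lt {α : Type} {η : Fin N → α} {k j : Fin N} (h : predIdx η k = j) : j < k :=
  (Finset.mem_filter.1 (Finset.mem_of_max h)).2.1

lemma YSystem.exists_hasUnitLeadingTerm (hD : IsDForm D E) (Y : YSystem E)
    (hy : ∀ k, Y.y k ∈ DRfull K D E.x) (k : Fin N) :
    ∃ w ∈ vanishingFrom ((k : ℕ) + 1), HasUnitLeadingTerm E D w (Y.y k) := by
  induction k using WellFoundedLT.induction with
  | _ k ih =>
  rcases hp : predIdx Y.η k with _ | j
  · refine ⟨Pi.single k 1, single_mem_vanishingFrom (Nat.lt_succ_self _) 1, ?_⟩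
    rw [Y.y_base k hp, ← pbw_single]
    exact hasUnitLeadingTerm_pbw _
  have hjk : j < k := predIdx_lt hp
  obtain ⟨w, hw, hlead⟩ := ih j hjk
  have hwk : w ∈ vanishingFrom (k : ℕ) := vanishingFrom_mono hjk hw
  have hc : Y.c k ∈ pbwLattice E D := by
    rw [← SetLike.mem_coe, ← coe_DRfull_eq_pbwLattice hD,
      show Y.c k = Y.y j * E.x k - Y.y k by rw [Y.y_rec k j hp, sub_sub_cancel]]
    exact sub_mem (mul_mem (hy j) (x_mem_DRfull k)) (hy k)
  have hcS := Rk_subset_pbwSupported (unitLeadingProducts hD k.2.le) (Y.c_mem k)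
  have hv : w + Pi.single k 1 ∈ vanishingFrom ((k : ℕ) + 1) :=
    add_mem_vanishingFrom (vanishingFrom_mono (Nat.le_succ _) hwk)
      (single_mem_vanishingFrom (Nat.lt_succ_self _) 1)
  refine ⟨w + Pi.single k 1, hv, ?_⟩
  rw [Y.y_rec k j hp]
  refine (pow_one (E.x k) ▸ hlead.mul_x_pow hwk 1).sub_of_lt hc
    (pbwSupported_mono (fun e he => ?_) hcS)
  exact colex_lt_of_lt_of_vanishingFrom (vanishingFrom_mono (Nat.le_succ _) he) hv
    (by simp [he k le_rfl, hwk k le_rfl])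

lemma mem_pbwLattice_of_mul_mem (hD : IsDForm D E) {w : Fin N → ℕ} {y : R}
    (hy : HasUnitLeadingTerm E D w y) {r : R} (hr : r * y ∈ pbwLattice E D) :
    r ∈ pbwLattice E D := by
  induction hn : (E.pbw.repr r).support.card using Nat.strong_induction_on generalizing r with
  | _ n ih =>
  rcases (E.pbw.repr r).support.eq_empty_or_nonempty with h0 | hne
  · rw [Finsupp.support_eq_empty, LinearEquiv.map_eq_zero_iff] at h0
    exact h0 ▸ zero_mem _
  obtain ⟨f, hf, hmax⟩ := (E.pbw.repr r).support.exists_max_image toColex hne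
  have hrS : r ∈ pbwSupported E (toColex ⁻¹' Set.Iic (toColex f)) :=
    mem_pbwSupported_iff.2 fun e he => hmax e (Finsupp.mem_support_iff.2 he)
  set c := E.pbw.repr r f
  set r₀ := r - c • E.pbw f with hr₀_def
  have hr₀ : r₀ ∈ pbwSupported E (toColex ⁻¹' Set.Iio (toColex f)) :=
    sub_smul_pbw_mem_pbwSupported_Iio hrS
  have hunit := hy.3.mul (hasUnitLeadingTerm_pbw_mul hD f w).3
  have hc : c ∈ D := by
    have := mul_mem (mem_pbwLattice_iff.1 hr (f + w)) hunit.2.2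
    rwa [repr_mul_of_mem_Iic hD hrS hy.2, mul_assoc c, mul_assoc, mul_inv_cancel₀ hunit.2.1,
      mul_one] at this
  have hr₀y : r₀ * y ∈ pbwLattice E D := by
    rw [hr₀_def, sub_mul, smul_mul_assoc]
    exact sub_mem hr (smul_mem_pbwLattice hc ((hasUnitLeadingTerm_pbw f).mul hD hy).1)
  have hsupp : (E.pbw.repr r₀).support ⊂ (E.pbw.repr r).support := by
    refine (Finset.ssubset_iff_of_subset fun e he => ?_).2
      ⟨f, hf, fun h => lt_irrefl (toColex f) (mem_of_mem_pbwSupported hr₀ h)⟩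
    have hef : e ≠ f := fun h => lt_irrefl (toColex f) (h ▸ mem_of_mem_pbwSupported hr₀ he)
    rw [Finsupp.mem_support_iff] at he ⊢
    simpa [r₀, Finsupp.single_apply, Ne.symm hef] using he
  have := ih _ (hn ▸ Finset.card_lt_card hsupp) hr₀y rfl
  rw [show r = r₀ + c • E.pbw f by simp [r₀]]
  exact add_mem this (smul_mem_pbwLattice hc (pbw_mem_pbwLattice f))

lemma mem_DRfull_of_mul_mem (hD : IsDForm D E) (Y : YSystem E)
    (hy : ∀ k : Fin N, Y.y k ∈ DRfull K D E.x) {s : R}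
    (hs : s ∈ Submonoid.closure
      ({r : R | ∃ t : K, isUnitIn K D t ∧ r = algebraMap K R t} ∪
        {r : R | ∃ k : Fin N, r = Y.y k}))
    {r : R} (hr : r * s ∈ DRfull K D E.x) : r ∈ DRfull K D E.x := by
  induction hs using Submonoid.closure_induction generalizing r with
  | mem s hs =>
    rcases hs with ⟨t, ⟨-, ht0, htinv⟩, rfl⟩ | ⟨k, rfl⟩
    · simpa [mul_assoc, ← map_mul, ht0] using mul_mem hr (algebraMap_mem_DRfull (E := E) htinv)
    · obtain ⟨w, -, hw⟩ := Y.exists_hasUnitLeadingTerm hD hy k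
      rw [← SetLike.mem_coe, coe_DRfull_eq_pbwLattice hD] at hr ⊢
      exact mem_pbwLattice_of_mul_mem hD hw hr
  | one => simpa using hr
  | mul s s' _ _ ih ih' => exact ih (ih' (by rwa [mul_assoc]))

end Localization

/-- **Proposition.** Let `R` be a CGL extension whose presentation has a `D`-form
`R_D = D⟨x_1,…,x_N⟩` containing `y_1,…,y_N`, and let `Y` be the multiplicative set
generated by `D^× ∪ {y_1,…,y_N}` (a denominator set in `R_D`). Then
`R_D[Y^{-1}] ∩ R = R_D` inside `R[Y^{-1}]`: the elements of `R` of the form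
`a y^{-1}` (i.e. with `r y = a` for some `a ∈ R_D`, `y ∈ Y`) are precisely the
elements of `R_D`. -/
theorem loc_intersection {K : Type} [Field K] {R : Type} [Ring R] [Algebra K R] {N : ℕ}
    (E : CGLExt K R N) (D : Subring K) (hD : IsDForm D E)
    (Y : YSystem E) (hy : ∀ k : Fin N, Y.y k ∈ DRfull K D E.x) :
    {r : R | ∃ a ∈ DRfull K D E.x,
        ∃ s ∈ Submonoid.closure
          ({r : R | ∃ t : K, isUnitIn K D t ∧ r = algebraMap K R t} ∪
            {r : R | ∃ k : Fin N, r = Y.y k}),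
        r * s = a} =
      (DRfull K D E.x : Set R) := by
  ext r
  exact ⟨fun ⟨a, ha, s, hs, hrs⟩ => mem_DRfull_of_mul_mem hD Y hy hs (hrs ▸ ha),
    fun hr => ⟨r, hr, 1, one_mem _, mul_one r⟩⟩

end GYint
end

section
/- Let g be a symmetrizable Kac–Moody algebra and w ∈ W with reduced expression w = s_{i_1}···s_{i_N}. The N × (N − |S(w)|) integer matrix B̃^w with columns indexed by ex(w) := {k ∈ [1,N] : s(k) ≠ +∞} and entries (B̃^w)_{jk} = 1 if j = p(k); −1 if j = s(k); a_{i_j i_k} if j < k < s(j) < s(k); −a_{i_j i_k} if k < j < s(k) < s(j); and 0 otherwise, is compatible with the matrix r^w given by (r^w)_{kj} = q^{−((w_{≤k}+1)ϖ_{i_k}, (w_{≤j}−1)ϖ_{i_j})/2} for j < k; more precisely, its columns (B̃^w)^k, k ∈ ex(w), satisfy Ω_{r^w}((B̃^w)^k, e_l) = q_{i_k}^{−δ_{kl}} for all l ∈ [1,N] and Σ_j (B̃^w)_{jk}(w_{≤j} − 1)ϖ_{i_j} = 0. -/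
open scoped Classical

namespace GYKM

/-! ## Cartan data, weights and the Weyl group action -/

/-- A symmetrizable generalized Cartan matrix `(a_{ij})` on the index set `I = Fin r`,
with symmetrizing positive integers `d_i`. -/
structure CartanDatum (r : ℕ) where
  a : Fin r → Fin r → ℤ
  d : Fin r → ℤ
  d_pos : ∀ i, 0 < d i
  a_diag : ∀ i, a i i = 2
  a_off : ∀ i j, i ≠ j → a i j ≤ 0
  symm : ∀ i j, d i * a i j = d j * a j i

/-- A realization of the weight space of the Kac–Moody algebra: a `ℚ`-vector space `V`
carrying the invariant symmetric bilinear form `B` (with `(α_i, α_j) = d_i a_{ij}`),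
the fundamental weights `fw i = ϖ_i` and simple roots `sr i = α_i`, normalized by
`⟨h_i, ϖ_j⟩ = (α_i, ϖ_j)/d_i = δ_{ij}`. -/
structure KMWeights (r : ℕ) (C : CartanDatum r) (V : Type) [AddCommGroup V]
    [Module ℚ V] where
  B : V →ₗ[ℚ] V →ₗ[ℚ] ℚ
  Bsymm : ∀ u v : V, B u v = B v u
  fw : Fin r → V
  sr : Fin r → V
  pairing : ∀ i j, B (sr i) (fw j) = if i = j then (C.d i : ℚ) else 0
  form_sr : ∀ i j, B (sr i) (sr j) = (C.d i : ℚ) * (C.a i j : ℚ)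

variable {r : ℕ} {C : CartanDatum r} {V : Type} [AddCommGroup V] [Module ℚ V]

/-- The simple reflection `s_i` acting on the weight space:
`s_i(v) = v - ⟨h_i, v⟩ α_i = v - ((α_i, v)/d_i) α_i`. -/
def refl (W : KMWeights r C V) (i : Fin r) (v : V) : V :=
  v - ((W.B (W.sr i) v) / (C.d i : ℚ)) • W.sr i

/-- The action of the word `s_{L₀} s_{L₁} ⋯` on the weight space. -/
def wordProd (W : KMWeights r C V) (L : List (Fin r)) : V → V :=
  L.foldr (fun i f => refl W i ∘ f) id

/-- `w_{≤m} = s_{i_1} ⋯ s_{i_m}` : the action of the first `m` letters of the word `ii`. -/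
def wle (W : KMWeights r C V) {N : ℕ} (ii : Fin N → Fin r) (m : ℕ) : V → V :=
  wordProd W ((List.ofFn ii).take m)

/-- The word `ii` of length `N` is a reduced expression (no shorter word of simple
reflections has the same action on the weight space). -/
def IsReducedWord (W : KMWeights r C V) {N : ℕ} (ii : Fin N → Fin r) : Prop :=
  ∀ L : List (Fin r), wordProd W L = wle W ii N → N ≤ L.length

/-! ## Predecessor/successor functions of the level sets of `k ↦ i_k` -/

/-- The predecessor function `p(k)` for the level sets of `η`. -/
noncomputable def predIdx {N : ℕ} {α : Type} (η : Fin N → α) (k : Fin N) :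
    WithBot (Fin N) :=
  (Finset.univ.filter (fun j : Fin N => (j : ℕ) < (k : ℕ) ∧ η j = η k)).max

/-- The successor function `s(k)` for the level sets of `η`. -/
noncomputable def succIdx {N : ℕ} {α : Type} (η : Fin N → α) (k : Fin N) :
    WithTop (Fin N) :=
  (Finset.univ.filter (fun j : Fin N => (k : ℕ) < (j : ℕ) ∧ η j = η k)).min

/-- `s(k)` as an extended natural number. -/
noncomputable def succN {N : ℕ} {α : Type} (η : Fin N → α) (k : Fin N) : WithTop ℕ :=
  (succIdx η k).map (fun l : Fin N => (l : ℕ))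


/-! ## The initial exchange matrix `B̃^w` and the compatibility identities -/

variable {N : ℕ}

/-- The entries of the exchange matrix `B̃^w`. -/
noncomputable def bentry (C : CartanDatum r) (ii : Fin N → Fin r) (j k : Fin N) : ℤ :=
  if predIdx ii k = (j : WithBot (Fin N)) then 1
  else if succIdx ii k = (j : WithTop (Fin N)) then -1
  else if (j : ℕ) < (k : ℕ) ∧ ((k : ℕ) : WithTop ℕ) < succN ii j ∧
      succN ii j < succN ii k then C.a (ii j) (ii k)
  else if (k : ℕ) < (j : ℕ) ∧ ((j : ℕ) : WithTop ℕ) < succN ii k ∧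
      succN ii k < succN ii j then -(C.a (ii j) (ii k))
  else 0

/-- The exponent (with respect to `X = q^{1/2}`, i.e. twice the exponent of `q`) of the
entry `(r^w)_{kj} = q^{-((w_{≤k}+1)ϖ_{i_k}, (w_{≤j}-1)ϖ_{i_j})/2}` of the
multiplicatively skew-symmetric matrix `r^w` of the initial toric frame. -/
noncomputable def rwExp (W : KMWeights r C V) (ii : Fin N → Fin r) (k j : Fin N) : ℚ :=
  if (j : ℕ) < (k : ℕ) then
    -(W.B (wle W ii ((k : ℕ) + 1) (W.fw (ii k)) + W.fw (ii k))
        (wle W ii ((j : ℕ) + 1) (W.fw (ii j)) - W.fw (ii j)))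
  else if (k : ℕ) < (j : ℕ) then
    W.B (wle W ii ((j : ℕ) + 1) (W.fw (ii j)) + W.fw (ii j))
      (wle W ii ((k : ℕ) + 1) (W.fw (ii k)) - W.fw (ii k))
  else 0

/-!
Write `β_t = w_{<t} α_{i_t}` for the roots of the word; then
`w_{<m} ϖ_i - w_{≤j} ϖ_i = Σ_{m ≤ t ≤ j, i_t = i} β_t`. The `k`-th column of `B̃^w` is the
difference `ε(s(j)) - ε(j)` (with `ε(+∞) = 0`) of the coefficient vector of the root relation
`β_k + Σ_{k<t<s(k)} a_{i_t i_k} β_t + β_{s(k)} = 0`, which comes from telescoping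
`s_{i_t} α_{i_k} = α_{i_k} - a_{i_t i_k} α_{i_t}` between `k` and `s(k)`. Summing by parts along
the level sets of `t ↦ i_t` therefore turns `Σ_j b_{jk} Σ_{t ≤ j, i_t = i_j} c_t` into
`-Σ_t ε_t c_t`. With `c = β` this gives the second identity.

For the first one, Weyl invariance of the form and the second identity reduce
`Σ_j b_{jk} (r^w)_{jl}` to `-2` times the sum over `j > l` of
`b_{jk} ((w_{≤l} ϖ_{i_l}, w_{≤j} ϖ_{i_j}) - (ϖ_{i_l}, ϖ_{i_j}))`. As
`(w_{≤j} ϖ_{i_l}, w_{≤j} ϖ_{i_j}) = (ϖ_{i_l}, ϖ_{i_j})`, expanding `w_{≤l} ϖ_{i_l} - w_{≤j} ϖ_{i_l}`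
in roots turns this into a sum over `m > l` with `i_m = i_l` of
`Σ_{j ≥ m} b_{jk} (β_m, w_{≤j} ϖ_{i_j})`. The same summation by parts, together with
`Σ_{t ≥ m} ε_t β_t = w_{<m} α_{i_k}` for `k < m ≤ s(k)`, evaluates each of these to
`d_{i_k} ([m = s(k)] - [m = k])`, and only `l = k` survives.
-/

theorem _root_.Finset.min_eq_coe_iff {β : Type*} [LinearOrder β] {s : Finset β} {a : β} :
    s.min = a ↔ a ∈ s ∧ ∀ b ∈ s, a ≤ b :=
  ⟨fun h => ⟨Finset.mem_of_min h, fun _ hb => Finset.min_le_of_eq hb h⟩,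
    fun h => le_antisymm (Finset.min_le h.1)
      (Finset.le_min fun b hb => WithTop.coe_le_coe.2 (h.2 b hb))⟩

theorem _root_.Finset.max_eq_coe_iff {β : Type*} [LinearOrder β] {s : Finset β} {a : β} :
    s.max = a ↔ a ∈ s ∧ ∀ b ∈ s, b ≤ a :=
  ⟨fun h => ⟨Finset.mem_of_max h, fun _ hb => Finset.le_max_of_eq hb h⟩,
    fun h => le_antisymm (Finset.max_le fun b hb => WithBot.coe_le_coe.2 (h.2 b hb))
      (Finset.le_max h.1)⟩

theorem sum_filter_lt_succ {M : Type*} [AddCommMonoid M] (p : Fin N → Prop) [DecidablePred p]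
    (n : Fin N) (f : Fin N → M) :
    ∑ t with p t ∧ ↑t < (n : ℕ) + 1, f t =
      (∑ t with p t ∧ ↑t < (n : ℕ), f t) + if p n then f n else 0 := by
  rw [← Fintype.sum_ite_eq' n (fun t => if p t then f t else 0), Finset.sum_filter,
    Finset.sum_filter, ← Finset.sum_add_distrib]
  refine Finset.sum_congr rfl fun t _ => ?_
  rcases lt_trichotomy t n with h | rfl | h
  · simp [h, h.ne, Nat.lt_succ_of_lt h]
  · simp
  · simp [h.ne', show ¬ (t : ℕ) < n + 1 by omega, show ¬ (t : ℕ) < n by omega]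

section LevelSets

variable {α : Type} (η : Fin N → α)

theorem succIdx_eq_coe_iff {j u : Fin N} :
    succIdx η j = u ↔ j < u ∧ η u = η j ∧ ∀ t, j < t → η t = η j → u ≤ t := by
  simp [succIdx, Finset.min_eq_coe_iff, and_assoc]

theorem succIdx_eq_top_iff {j : Fin N} : succIdx η j = ⊤ ↔ ∀ t, j < t → η t ≠ η j := by
  simp [succIdx, Finset.min_eq_top, Finset.filter_eq_empty_iff]

theorem predIdx_eq_coe_iff {j k : Fin N} :
    predIdx η k = j ↔ j < k ∧ η j = η k ∧ ∀ t, t < k → η t = η k → t ≤ j := by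
  simp [predIdx, Finset.max_eq_coe_iff, and_assoc]

theorem predIdx_eq_coe_iff_succIdx_eq_coe {j k : Fin N} : predIdx η k = j ↔ succIdx η j = k := by
  rw [predIdx_eq_coe_iff, succIdx_eq_coe_iff]
  refine ⟨fun ⟨hjk, hη, h⟩ => ⟨hjk, hη.symm, fun t hjt ht => ?_⟩,
    fun ⟨hjk, hη, h⟩ => ⟨hjk, hη.symm, fun t htk ht => ?_⟩⟩
  · exact not_lt.1 fun htk => (h t htk (ht.trans hη)).not_gt hjt
  · exact not_lt.1 fun hjt => (h t hjt (ht.trans hη)).not_gt htk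

theorem succN_eq_coe {j u : Fin N} (h : succIdx η j = u) :
    succN η j = ((u : ℕ) : WithTop ℕ) := by
  simp [succN, h]

noncomputable def atSucc {G : Type*} [Zero G] (f : Fin N → G) (j : Fin N) : G :=
  WithTop.recTopCoe 0 f (succIdx η j)

variable [DecidableEq α]

theorem sum_levelSet_atSucc_sub {G : Type*} [AddCommGroup G] (f : Fin N → G) (t : Fin N) :
    ∑ j with η j = η t ∧ t ≤ j, (atSucc η f j - f j) = -f t := by
  induction t using WellFoundedGT.induction with
  | ind t ih =>
    cases hs : succIdx η t using WithTop.recTopCoe with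
    | top =>
      have hlast := (succIdx_eq_top_iff η).1 hs
      rw [Finset.sum_eq_single_of_mem t (by simp), atSucc, hs, WithTop.recTopCoe_top, zero_sub]
      intro j hj hjt
      simp only [Finset.mem_filter, Finset.mem_univ, true_and] at hj
      exact hlast j (lt_of_le_of_ne hj.2 (Ne.symm hjt)) hj.1 |>.elim
    | coe u =>
      obtain ⟨htu, hηu, hmin⟩ := (succIdx_eq_coe_iff η).1 hs
      have hsplit : Finset.univ.filter (fun j => η j = η t ∧ t ≤ j) =
          insert t (Finset.univ.filter fun j => η j = η u ∧ u ≤ j) := by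
        ext j
        simp only [Finset.mem_filter, Finset.mem_univ, true_and, Finset.mem_insert, hηu]
        constructor
        · rintro ⟨hj, htj⟩
          rcases htj.eq_or_lt with rfl | htj
          · exact Or.inl rfl
          · exact Or.inr ⟨hj, hmin j htj hj⟩
        · rintro (rfl | ⟨hj, huj⟩)
          · exact ⟨rfl, le_rfl⟩
          · exact ⟨hj, htu.le.trans huj⟩
      rw [hsplit, Finset.sum_insert (by simp [htu.not_ge]), ih u htu, atSucc, hs,
        WithTop.recTopCoe_coe]
      abel

theorem sum_zsmul_sum_levelSet {M : Type*} [AddCommGroup M] (f : Fin N → ℤ) (c : Fin N → M) :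
    ∑ j, (atSucc η f j - f j) • ∑ t with η t = η j ∧ t ≤ j, c t = -∑ t, f t • c t := by
  simp_rw [Finset.smul_sum]
  rw [Finset.sum_comm' (t' := Finset.univ)
    (s' := fun t => Finset.univ.filter fun j => η j = η t ∧ t ≤ j)
    (fun j t => by simp [eq_comm])]
  simp_rw [← Finset.sum_smul, sum_levelSet_atSucc_sub, neg_smul, Finset.sum_neg_distrib]

end LevelSets

section WeylGroup

variable (W : KMWeights r C V)

def reflLinear (i : Fin r) : Module.End ℚ V :=
  LinearMap.id - ((C.d i : ℚ)⁻¹ • W.B (W.sr i)).smulRight (W.sr i)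

theorem coe_reflLinear (i : Fin r) : ⇑(reflLinear W i) = refl W i := by
  ext v
  simp [reflLinear, refl, div_eq_inv_mul]

theorem wordProd_eq_coe_prod (L : List (Fin r)) :
    wordProd W L = ⇑(L.map (reflLinear W)).prod := by
  induction L with
  | nil => rfl
  | cons i L ih =>
    change refl W i ∘ wordProd W L = _
    rw [ih, List.map_cons, List.prod_cons, Module.End.coe_mul, coe_reflLinear]

theorem B_refl (i : Fin r) (u v : V) : W.B (refl W i u) (refl W i v) = W.B u v := by
  have hd : (C.d i : ℚ) ≠ 0 := by exact_mod_cast (C.d_pos i).ne'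
  have hα : W.B (W.sr i) (W.sr i) = 2 * C.d i := by rw [W.form_sr, C.a_diag]; push_cast; ring
  simp only [refl, map_sub, map_smul, LinearMap.sub_apply, LinearMap.smul_apply, smul_eq_mul,
    hα, W.Bsymm u (W.sr i)]
  field_simp
  ring

theorem B_wordProd (L : List (Fin r)) (u v : V) :
    W.B (wordProd W L u) (wordProd W L v) = W.B u v := by
  induction L with
  | nil => rfl
  | cons i L ih => exact (B_refl W i _ _).trans ih

variable (ii : Fin N → Fin r)

theorem B_wle (m : ℕ) (u v : V) : W.B (wle W ii m u) (wle W ii m v) = W.B u v :=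
  B_wordProd W _ u v

theorem wle_zero : wle W ii 0 = id := rfl

theorem wle_succ (n : Fin N) : wle W ii (n + 1) = wle W ii n ∘ refl W (ii n) := by
  have htake : (List.ofFn ii).take (n + 1) = (List.ofFn ii).take n ++ [ii n] := by
    rw [List.take_add_one, List.getElem?_ofFn]
    simp
  rw [wle, wle, htake, wordProd_eq_coe_prod, wordProd_eq_coe_prod, List.map_append,
    List.prod_append, Module.End.coe_mul, ← coe_reflLinear]
  simp

def prefixRoot (t : Fin N) : V := wle W ii t (W.sr (ii t))

def prefixWeight (j : Fin N) : V := wle W ii (j + 1) (W.fw (ii j))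

theorem wle_succ_apply (n : Fin N) (v : V) :
    wle W ii (n + 1) v =
      wle W ii n v - (W.B (W.sr (ii n)) v / C.d (ii n)) • prefixRoot W ii n := by
  rw [wle_succ, Function.comp_apply, refl, wle, wordProd_eq_coe_prod, map_sub, map_smul,
    prefixRoot, wle, wordProd_eq_coe_prod]

theorem wle_succ_fw (n : Fin N) (i : Fin r) :
    wle W ii (n + 1) (W.fw i) =
      wle W ii n (W.fw i) - if ii n = i then prefixRoot W ii n else 0 := by
  have hd : (C.d (ii n) : ℚ) ≠ 0 := by exact_mod_cast (C.d_pos _).ne'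
  rw [wle_succ_apply, W.pairing]
  split_ifs <;> simp [hd]

theorem wle_succ_sr (n : Fin N) (i : Fin r) :
    wle W ii (n + 1) (W.sr i) =
      wle W ii n (W.sr i) - (C.a (ii n) i : ℚ) • prefixRoot W ii n := by
  have hd : (C.d (ii n) : ℚ) ≠ 0 := by exact_mod_cast (C.d_pos _).ne'
  rw [wle_succ_apply, W.form_sr, mul_div_cancel_left₀ _ hd]

theorem wle_fw_sub_wle_fw (i : Fin r) {m n : ℕ} (hmn : m ≤ n) (hn : n ≤ N) :
    wle W ii m (W.fw i) - wle W ii n (W.fw i) =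
      ∑ t with ii t = i ∧ m ≤ ↑t ∧ ↑t < n, prefixRoot W ii t := by
  induction n, hmn using Nat.le_induction with
  | base =>
    rw [sub_self, eq_comm]
    exact Finset.sum_eq_zero fun t ht => by simp at ht; omega
  | succ n hmn ih =>
    have h := sum_filter_lt_succ (fun t => ii t = i ∧ m ≤ ↑t) ⟨n, by omega⟩
      (prefixRoot W ii)
    simp only [hmn, and_true, and_assoc] at h
    rw [h, ← ih (by omega), wle_succ_fw W ii ⟨n, by omega⟩]
    abel

theorem wle_fw_sub_wle_fw_succ (i : Fin r) {m : ℕ} (j : Fin N) (hm : m ≤ j + 1) :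
    wle W ii m (W.fw i) - wle W ii (j + 1) (W.fw i) =
      ∑ t with ii t = i ∧ m ≤ ↑t ∧ t ≤ j, prefixRoot W ii t := by
  rw [wle_fw_sub_wle_fw W ii i hm j.isLt]
  exact Finset.sum_congr
    (Finset.filter_congr fun t _ => by rw [Nat.lt_succ_iff, Fin.val_fin_le]) fun _ _ => rfl

theorem prefixWeight_sub_fw (j : Fin N) :
    prefixWeight W ii j - W.fw (ii j) = -∑ t with ii t = ii j ∧ t ≤ j, prefixRoot W ii t := by
  have h := wle_fw_sub_wle_fw_succ W ii (ii j) j (Nat.zero_le _)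
  simp only [zero_le, true_and] at h
  rw [prefixWeight, ← h, wle_zero, id, neg_sub]

end WeylGroup

section ExchangeMatrix

variable (C) (ii : Fin N → Fin r)

def rootRelCoeff (k sk t : Fin N) : ℤ :=
  if t = k ∨ t = sk then 1 else if k < t ∧ t < sk then C.a (ii t) (ii k) else 0

theorem bentry_eq_atSucc_sub {k sk : Fin N} (hsk : succIdx ii k = sk) (j : Fin N) :
    bentry C ii j k = atSucc ii (rootRelCoeff C ii k sk) j - rootRelCoeff C ii k sk j := by
  obtain ⟨hk, hkc, hkmin⟩ := (succIdx_eq_coe_iff ii).1 hsk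
  simp only [bentry, predIdx_eq_coe_iff_succIdx_eq_coe, hsk, succN_eq_coe ii hsk, atSucc]
  cases hj : succIdx ii j using WithTop.recTopCoe with
  | top =>
    have hjlast := (succIdx_eq_top_iff ii).1 hj
    have hjk : j ≠ k := fun h => hjlast sk (h ▸ hk) (h ▸ hkc)
    simp only [WithTop.top_ne_coe, ↓reduceIte, WithTop.coe_inj, Int.reduceNeg, Fin.val_fin_lt,
      succN, hj, WithTop.map_top, WithTop.natCast_lt_top, not_top_lt, and_false, Nat.cast_lt,
      and_true, WithTop.recTopCoe_top, rootRelCoeff, zero_sub]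
    split_ifs <;> omega
  | coe u =>
    obtain ⟨hu, huc, humin⟩ := (succIdx_eq_coe_iff ii).1 hj
    simp only [WithTop.coe_inj, Int.reduceNeg, Fin.val_fin_lt, succN_eq_coe ii hj, Nat.cast_lt,
      WithTop.recTopCoe_coe, rootRelCoeff, huc]
    by_cases hc : ii j = ii k
    · have : k < j → sk ≤ j := fun h => hkmin j h hc
      have : k < u → sk ≤ u := fun h => hkmin u h (huc.trans hc)
      have : j < k → u ≤ k := fun h => humin k h hc.symm
      have : j < sk → u ≤ sk := fun h => humin sk h (hkc.trans hc.symm)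
      split_ifs <;> omega
    · have : j ≠ k := fun h => hc (h ▸ rfl)
      have : j ≠ sk := fun h => hc (h ▸ hkc)
      have : u ≠ k := fun h => hc (huc ▸ h ▸ rfl)
      have : u ≠ sk := fun h => hc (huc ▸ h ▸ hkc)
      split_ifs <;> omega

theorem neg_rootRelCoeff_mul_d_add {k sk : Fin N} (hsk : succIdx ii k = sk) (m : Fin N) :
    -(rootRelCoeff C ii k sk m : ℚ) * C.d (ii m) +
        (if k < m ∧ m ≤ sk then (C.d (ii m) : ℚ) * C.a (ii m) (ii k) else 0) =
      C.d (ii k) * ((if m = sk then 1 else 0) - if m = k then 1 else 0) := by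
  obtain ⟨hk, hkc, -⟩ := (succIdx_eq_coe_iff ii).1 hsk
  simp only [rootRelCoeff]
  split_ifs <;> simp_all [C.a_diag] <;> first | omega | ring

end ExchangeMatrix

section Compatibility

variable (W : KMWeights r C V) (ii : Fin N → Fin r)

theorem sum_rootRelCoeff_smul_prefixRoot_lt {k sk : Fin N} (hsk : succIdx ii k = sk) {m : ℕ}
    (hm : m ≤ N) :
    ∑ t : Fin N with t.val < m, rootRelCoeff C ii k sk t • prefixRoot W ii t =
      if k < m ∧ m ≤ sk then -wle W ii m (W.sr (ii k)) else 0 := by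
  obtain ⟨hk, hkc, -⟩ := (succIdx_eq_coe_iff ii).1 hsk
  induction m with
  | zero => simp
  | succ m ih =>
    obtain ⟨n, rfl⟩ : ∃ n : Fin N, (n : ℕ) = m := ⟨⟨m, hm⟩, rfl⟩
    have h := sum_filter_lt_succ (fun _ => True) n
      (fun t => rootRelCoeff C ii k sk t • prefixRoot W ii t)
    simp only [true_and, if_true] at h
    have hroot : n = k ∨ n = sk → prefixRoot W ii n = wle W ii n (W.sr (ii k)) := by
      rintro (h | h) <;> simp [prefixRoot, h, hkc]
    rw [h, ih (by omega), wle_succ_sr]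
    simp only [rootRelCoeff, ← Int.cast_smul_eq_zsmul ℚ]
    split_ifs with _ hn <;> try omega
    · rw [hroot hn]
      simp
    · abel
    · obtain rfl : n = k := by omega
      rw [hroot (Or.inl rfl), C.a_diag]
      module
    · simp

theorem sum_rootRelCoeff_smul_prefixRoot {k sk : Fin N} (hsk : succIdx ii k = sk) :
    ∑ t, rootRelCoeff C ii k sk t • prefixRoot W ii t = 0 := by
  have h := sum_rootRelCoeff_smul_prefixRoot_lt W ii hsk le_rfl
  rwa [if_neg (fun h => sk.isLt.not_ge h.2), Finset.filter_true_of_mem fun t _ => t.isLt] at h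

theorem sum_rootRelCoeff_smul_prefixRoot_ge {k sk : Fin N} (hsk : succIdx ii k = sk)
    (m : Fin N) :
    ∑ t with m ≤ t, rootRelCoeff C ii k sk t • prefixRoot W ii t =
      if k < m ∧ m ≤ sk then wle W ii m (W.sr (ii k)) else 0 := by
  have h := Finset.sum_filter_add_sum_filter_not Finset.univ (fun t : Fin N => t.val < m)
    fun t => rootRelCoeff C ii k sk t • prefixRoot W ii t
  rw [sum_rootRelCoeff_smul_prefixRoot_lt W ii hsk m.isLt.le,
    sum_rootRelCoeff_smul_prefixRoot W ii hsk] at h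
  simp only [not_lt, Fin.val_fin_le, Fin.val_fin_lt] at h
  rw [eq_neg_of_add_eq_zero_right h]
  split_ifs <;> simp

theorem sum_bentry_smul_prefixWeight_sub {k sk : Fin N} (hsk : succIdx ii k = sk) :
    ∑ j, bentry C ii j k • (prefixWeight W ii j - W.fw (ii j)) = 0 := by
  simp_rw [prefixWeight_sub_fw, smul_neg, Finset.sum_neg_distrib, bentry_eq_atSucc_sub C ii hsk,
    sum_zsmul_sum_levelSet, neg_neg]
  exact sum_rootRelCoeff_smul_prefixRoot W ii hsk

theorem rwExp_eq (j l : Fin N) :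
    rwExp W ii j l =
      W.B (prefixWeight W ii l + W.fw (ii l)) (prefixWeight W ii j - W.fw (ii j)) -
        if l < j then 2 * (W.B (prefixWeight W ii l) (prefixWeight W ii j) -
          W.B (W.fw (ii l)) (W.fw (ii j))) else 0 := by
  have hsymm := W.Bsymm
  change (if l < j then -W.B (prefixWeight W ii j + _) (prefixWeight W ii l - _)
    else if j < l then W.B (prefixWeight W ii l + _) (prefixWeight W ii j - _) else 0) = _
  simp only [map_add, map_sub, LinearMap.add_apply]
  rcases lt_trichotomy l j with hlj | rfl | hjl
  · rw [if_pos hlj, if_pos hlj, hsymm (prefixWeight W ii j), hsymm (prefixWeight W ii j),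
      hsymm (W.fw (ii j)), hsymm (W.fw (ii j))]
    ring
  · have hP : W.B (prefixWeight W ii l) (prefixWeight W ii l) =
        W.B (W.fw (ii l)) (W.fw (ii l)) := B_wle W ii _ _ _
    simp only [lt_irrefl, if_false, sub_zero]
    linear_combination -hP - hsymm (W.fw (ii l)) (prefixWeight W ii l)
  · rw [if_neg hjl.not_gt, if_pos hjl, if_neg hjl.not_gt, sub_zero]

theorem B_prefixWeight_sub_B_fw {l j : Fin N} (hlj : l < j) :
    W.B (prefixWeight W ii l) (prefixWeight W ii j) - W.B (W.fw (ii l)) (W.fw (ii j)) =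
      ∑ m with ii m = ii l ∧ l < m ∧ m ≤ j, W.B (prefixRoot W ii m) (prefixWeight W ii j) := by
  have h := wle_fw_sub_wle_fw_succ W ii (ii l) j (m := l + 1) (by omega)
  rw [← B_wle W ii (j + 1) (W.fw (ii l)), ← prefixWeight, ← LinearMap.sub_apply, ← map_sub,
    prefixWeight, h, map_sum, LinearMap.sum_apply]
  exact Finset.sum_congr
    (Finset.filter_congr fun t _ => by rw [Nat.add_one_le_iff, Fin.val_fin_lt]) fun _ _ => rfl

theorem B_prefixRoot_prefixWeight {m j : Fin N} (hmj : m ≤ j) :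
    W.B (prefixRoot W ii m) (prefixWeight W ii j) =
      (if ii m = ii j then (C.d (ii m) : ℚ) else 0) -
        ∑ t with ii t = ii j ∧ m ≤ t ∧ t ≤ j, W.B (prefixRoot W ii m) (prefixRoot W ii t) := by
  have h := wle_fw_sub_wle_fw_succ W ii (ii j) j (m := m) (by omega)
  simp only [Fin.val_fin_le] at h
  rw [← map_sum, ← h, map_sub, prefixRoot, B_wle, W.pairing, prefixWeight, sub_sub_cancel]

theorem ite_le_B_prefixRoot_prefixWeight (m j : Fin N) :
    (if m ≤ j then W.B (prefixRoot W ii m) (prefixWeight W ii j) else 0) =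
      ∑ t with ii t = ii j ∧ t ≤ j, ((if t = m then (C.d (ii m) : ℚ) else 0) -
        if m ≤ t then W.B (prefixRoot W ii m) (prefixRoot W ii t) else 0) := by
  rw [Finset.sum_sub_distrib, Finset.sum_ite_eq', ← Finset.sum_filter, Finset.filter_filter]
  simp only [Finset.mem_filter, Finset.mem_univ, true_and]
  by_cases hmj : m ≤ j
  · rw [if_pos hmj, B_prefixRoot_prefixWeight W ii hmj]
    congr 1
    · simp [hmj]
    · exact Finset.sum_congr (Finset.filter_congr fun t _ => by tauto) fun _ _ => rfl
  · rw [if_neg hmj, if_neg fun h => hmj h.2, Finset.sum_eq_zero, sub_zero]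
    intro t ht
    simp only [Finset.mem_filter, Finset.mem_univ, true_and] at ht
    exact absurd (ht.2.trans ht.1.2) hmj

theorem sum_bentry_mul_B_prefixRoot_prefixWeight {k sk : Fin N} (hsk : succIdx ii k = sk)
    (m : Fin N) :
    ∑ j with m ≤ j, (bentry C ii j k : ℚ) * W.B (prefixRoot W ii m) (prefixWeight W ii j) =
      C.d (ii k) * ((if m = sk then 1 else 0) - if m = k then 1 else 0) := by
  set c : Fin N → ℚ := fun t => (if t = m then (C.d (ii m) : ℚ) else 0) -
    if m ≤ t then W.B (prefixRoot W ii m) (prefixRoot W ii t) else 0 with hc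
  calc ∑ j with m ≤ j, (bentry C ii j k : ℚ) * W.B (prefixRoot W ii m) (prefixWeight W ii j)
      = ∑ j, bentry C ii j k • ∑ t with ii t = ii j ∧ t ≤ j, c t := by
        rw [Finset.sum_filter]
        refine Finset.sum_congr rfl fun j _ => ?_
        rw [← ite_le_B_prefixRoot_prefixWeight, zsmul_eq_mul, mul_ite, mul_zero]
    _ = -∑ t, rootRelCoeff C ii k sk t • c t := by
        simp_rw [bentry_eq_atSucc_sub C ii hsk]
        exact sum_zsmul_sum_levelSet ii _ c
    _ = -(rootRelCoeff C ii k sk m : ℚ) * C.d (ii m) + W.B (prefixRoot W ii m)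
          (∑ t with m ≤ t, rootRelCoeff C ii k sk t • prefixRoot W ii t) := by
        simp only [hc, smul_sub, Finset.sum_sub_distrib, smul_ite, smul_zero, Finset.sum_ite_eq',
          Finset.mem_univ, if_true, ← Finset.sum_filter, map_sum, map_zsmul, zsmul_eq_mul]
        ring
    _ = _ := by
        rw [sum_rootRelCoeff_smul_prefixRoot_ge W ii hsk m,
          ← neg_rootRelCoeff_mul_d_add C ii hsk m]
        split_ifs
        · rw [prefixRoot, B_wle, W.form_sr]
        · rw [map_zero]

theorem sum_bentry_mul_B_prefixWeight_sub {k sk : Fin N} (hsk : succIdx ii k = sk)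
    (l : Fin N) :
    ∑ j with l < j, (bentry C ii j k : ℚ) *
        (W.B (prefixWeight W ii l) (prefixWeight W ii j) - W.B (W.fw (ii l)) (W.fw (ii j))) =
      if l = k then (C.d (ii k) : ℚ) else 0 := by
  obtain ⟨hk, hkc, hkmin⟩ := (succIdx_eq_coe_iff ii).1 hsk
  calc _ = ∑ j with l < j, ∑ m with ii m = ii l ∧ l < m ∧ m ≤ j,
          (bentry C ii j k : ℚ) * W.B (prefixRoot W ii m) (prefixWeight W ii j) :=
        Finset.sum_congr rfl fun j hj => by
          rw [B_prefixWeight_sub_B_fw W ii (Finset.mem_filter.1 hj).2, Finset.mul_sum]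
    _ = ∑ m with ii m = ii l ∧ l < m, ∑ j with m ≤ j,
          (bentry C ii j k : ℚ) * W.B (prefixRoot W ii m) (prefixWeight W ii j) :=
        Finset.sum_comm' fun j m => by
          simp only [Finset.mem_filter, Finset.mem_univ, true_and]
          exact ⟨fun ⟨_, hc, hlm, hmj⟩ => ⟨hmj, hc, hlm⟩,
            fun ⟨hmj, hc, hlm⟩ => ⟨hlm.trans_le hmj, hc, hlm, hmj⟩⟩
    _ = ∑ m with ii m = ii l ∧ l < m,
          (C.d (ii k) : ℚ) * ((if m = sk then 1 else 0) - if m = k then 1 else 0) :=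
        Finset.sum_congr rfl fun m _ => sum_bentry_mul_B_prefixRoot_prefixWeight W ii hsk m
    _ = C.d (ii k) * ((if ii sk = ii l ∧ l < sk then 1 else 0) -
          if ii k = ii l ∧ l < k then 1 else 0) := by
        rw [← Finset.mul_sum, Finset.sum_sub_distrib, Finset.sum_ite_eq', Finset.sum_ite_eq']
        simp only [Finset.mem_filter, Finset.mem_univ, true_and]
    _ = _ := by
        rw [hkc]
        rcases eq_or_ne l k with rfl | hlk
        · simp [hk]
        · rw [if_neg hlk]
          by_cases hc : ii k = ii l
          · have : k < l → sk ≤ l := fun h => hkmin l h hc.symm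
            simp only [hc, true_and]
            split_ifs <;> first | omega | ring
          · simp [hc]

theorem sum_bentry_mul_rwExp {k sk : Fin N} (hsk : succIdx ii k = sk) (l : Fin N) :
    ∑ j, (bentry C ii j k : ℚ) * rwExp W ii j l =
      if l = k then -2 * (C.d (ii k) : ℚ) else 0 := by
  have hzero : ∑ j, (bentry C ii j k : ℚ) *
      W.B (prefixWeight W ii l + W.fw (ii l)) (prefixWeight W ii j - W.fw (ii j)) = 0 := by
    simp_rw [← zsmul_eq_mul, ← map_zsmul, ← map_sum, sum_bentry_smul_prefixWeight_sub W ii hsk,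
      map_zero]
  simp_rw [rwExp_eq, mul_sub, Finset.sum_sub_distrib, hzero, mul_ite, mul_zero,
    ← Finset.sum_filter, ← mul_sub, mul_left_comm _ (2 : ℚ), ← Finset.mul_sum,
    sum_bentry_mul_B_prefixWeight_sub W ii hsk]
  split_ifs <;> ring

end Compatibility

/-- The identity `Ω_{r^w}((B̃^w)^k, e_l) = q_{i_k}^{-δ_{kl}}` is stated on exponents of
`X = q^{1/2}`: `Σ_j (B̃^w)_{jk} · exp_X((r^w)_{jl}) = -2 d_{i_k} δ_{kl}`. -/
theorem Bw_compatible_with_rw_general (C : CartanDatum r) (V : Type) [AddCommGroup V]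
    [Module ℚ V] (W : KMWeights r C V) (N : ℕ) (ii : Fin N → Fin r) :
    (∀ k : Fin N, succIdx ii k ≠ ⊤ → ∀ l : Fin N,
      (∑ j : Fin N, (bentry C ii j k : ℚ) * rwExp W ii j l) =
        (if l = k then -2 * (C.d (ii k) : ℚ) else 0)) ∧
    (∀ k : Fin N, succIdx ii k ≠ ⊤ →
      (∑ j : Fin N,
        (bentry C ii j k) • (wle W ii ((j : ℕ) + 1) (W.fw (ii j)) - W.fw (ii j))) = 0) := by
  refine ⟨fun k hk l => ?_, fun k hk => ?_⟩ <;>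
    obtain ⟨sk, hsk⟩ := WithTop.ne_top_iff_exists.1 hk
  · exact sum_bentry_mul_rwExp W ii hsk.symm l
  · exact sum_bentry_smul_prefixWeight_sub W ii hsk.symm

/-- **Proposition (compatibility of the initial pair `(r^w, B̃^w)`).**
For a symmetrizable Kac–Moody algebra `g` and a reduced expression
`w = s_{i_1} ⋯ s_{i_N}`, the matrix `B̃^w` (with columns indexed by
`ex(w) = {k : s(k) ≠ +∞}`) is compatible with `r^w`; more precisely, its columns
satisfy `Ω_{r^w}((B̃^w)^k, e_l) = q_{i_k}^{-δ_{kl}}` for all `l` — expressed here on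
the level of the exponents of `X = q^{1/2}`, i.e.
`Σ_j (B̃^w)_{jk}·exp_X((r^w)_{jl}) = -2 d_{i_k} δ_{kl}` — and
`Σ_j (B̃^w)_{jk} (w_{≤j} - 1) ϖ_{i_j} = 0`. -/
theorem Bw_compatible_with_rw (C : CartanDatum r) (V : Type) [AddCommGroup V]
    [Module ℚ V] (W : KMWeights r C V) (N : ℕ) (ii : Fin N → Fin r)
    (hred : IsReducedWord W ii) :
    (∀ k : Fin N, succIdx ii k ≠ ⊤ → ∀ l : Fin N,
      (∑ j : Fin N, (bentry C ii j k : ℚ) * rwExp W ii j l) =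
        (if l = k then -2 * (C.d (ii k) : ℚ) else 0)) ∧
    (∀ k : Fin N, succIdx ii k ≠ ⊤ →
      (∑ j : Fin N,
        (bentry C ii j k) • (wle W ii ((j : ℕ) + 1) (W.fw (ii j)) - W.fw (ii j))) = 0) :=
  Bw_compatible_with_rw_general C V W N ii

end GYKM
end
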